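/- arXiv:2105.09246 — 5 statements merged into one kernel-verified Lean document; each statement's English description precedes it below -/
import Mathlib

section
/- Let 1 < p < ∞ and 0 < q < ∞. Let λ and μ be Borel measures on ℝ such that λ(−∞,s] < ∞ for all s ∈ ℝ and μ[y,∞) < ∞ for all y ∈ ℝ. Suppose M : ℝ → [0,∞] satisfies μ(y,∞) ≤ M(y) ≤ μ[y,∞) for all y ∈ ℝ, and set M⁻¹(x) = sup{y ∈ ℝ : x < M(y)} for x > 0 (an element of [−∞,∞], with sup ∅ = −∞). Let Λ⁻(s) = λ(−∞,s) for s ∈ ℝ, extended by Λ⁻(−∞) = 0 and Λ⁻(+∞) = λ(ℝ). Then b = Λ⁻ ∘ M⁻¹ is a non-increasing function on (0,∞), and for every constant C ∈ [0,∞], the inequality (∫_ℝ (∫_{(−∞,y)} g dλ)^q dμ(y))^{1/q} ≤ C (∫_ℝ g^p dλ)^{1/p} holds for all nonnegative Borel-measurable g on ℝ if and only if ‖H_b f‖_{L^q(0,∞)} ≤ C‖f‖_{L^p(0,∞)} holds for all nonnegative Lebesgue-measurable f on (0,∞); that is, Λ⁻ ∘ M⁻¹ is the normal form parameter of this Hardy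 inequality. -/
/-!
Two generalized inverses turn the Hardy inequality for `lam` and `μ` into its normal form.
The quantile `Q` of `lam` maps Lebesgue measure on `(0, lam ℝ)` to `lam`, and for an open lower
set `D` one has `Q u ∈ D ↔ u < lam D`. Hence `∫_D g dlam = ∫_0^{lam D} g ∘ Q`, so `f = g ∘ Q` has
the same `L^p` norm as `g` and `H_b f x = ∫_{s < M⁻¹ x} g dlam`. Conversely, a given `f` is
replaced by its average `g` along `Q` (the mean of `f` over the interval `Q⁻¹ {s}` at an atom `s`),
which has the same Hardy integrals and, by Jensen, no larger `L^p` norm. Finally `M⁻¹` maps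
Lebesgue measure on `{x > 0 | M⁻¹ x > -∞}` to `μ`, which turns the outer `L^q(μ)` integral of
`y ↦ ∫_{s < y} g dlam` into the `L^q(0, ∞)` integral of `H_b f`.
-/

open MeasureTheory Set Filter Topology
open scoped ENNReal

noncomputable section

/-- The normal form Hardy operator: `H_b f (x) = ∫_0^{b x} f`, where the
upper endpoint `b x` may be infinite. -/
def hardyOp (b : ℝ → ℝ≥0∞) (f : ℝ → ℝ≥0∞) (x : ℝ) : ℝ≥0∞ :=
  ∫⁻ t in {t : ℝ | 0 < t ∧ ENNReal.ofReal t < b x}, f t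

/-- The `L^q` "norm" of an `ℝ≥0∞`-valued function with respect to a measure `ν`. -/
def lqNormGen {α : Type*} [MeasurableSpace α] (ν : Measure α) (q : ℝ≥0∞)
    (g : α → ℝ≥0∞) : ℝ≥0∞ :=
  if q = ∞ then essSup g ν else (∫⁻ x, g x ^ q.toReal ∂ν) ^ (1 / q.toReal)

/-- The `L^q` norm over `(0,∞)` with respect to Lebesgue measure. -/
def lqNorm (q : ℝ≥0∞) (g : ℝ → ℝ≥0∞) : ℝ≥0∞ :=
  lqNormGen (volume.restrict (Ioi (0 : ℝ))) q g

/-- `N_{p,q}(b)`: the least constant in the normal form Hardy inequality. -/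
def Npq (p q : ℝ≥0∞) (b : ℝ → ℝ≥0∞) : ℝ≥0∞ :=
  sInf {C : ℝ≥0∞ | ∀ f : ℝ → ℝ≥0∞, Measurable f →
    lqNorm q (hardyOp b f) ≤ C * lqNorm p f}

/-- The generalized inverse of a non-increasing `b : (0,∞) → [0,∞]`:
`b⁻¹ y = sup {x > 0 : y < b x}`, with `sup ∅ = 0`. -/
def genInv (b : ℝ → ℝ≥0∞) (y : ℝ) : ℝ≥0∞ :=
  ⨆ (x : ℝ) (_ : 0 < x ∧ ENNReal.ofReal y < b x), ENNReal.ofReal x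

/-- The sharp Hardy–Bliss constant `K_{p,q}` for `1 < p ≤ q < ∞`. -/
def Kpq (p q : ℝ) : ℝ :=
  if p = q then p ^ (1/p) * (p / (p - 1)) ^ (1 - 1/p)
  else
    (Real.Gamma (1 / (1/p - 1/q)) /
        (Real.Gamma ((1 / (1/p - 1/q)) / p) *
          Real.Gamma ((1 / (1/p - 1/q)) / (q / (q - 1))))) ^ (1/p - 1/q)

section OrderMeasure

variable {α : Type*} [ConditionallyCompleteLinearOrder α] [TopologicalSpace α] [OrderTopology α]
  [MeasurableSpace α]

lemma exists_lt_measure_Iic_of_lt_measure_Iio [FirstCountableTopology α] [DenselyOrdered α]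
    [NoMinOrder α] (ν : Measure α) {a : α} {c : ℝ≥0∞} (h : c < ν (Iio a)) :
    ∃ s < a, c < ν (Iic s) := by
  obtain ⟨u, hu_mono, hu_lt, hu_lim⟩ := exists_seq_strictMono_tendsto a
  rw [← iUnion_Iic_eq_Iio_of_lt_of_tendsto hu_lt hu_lim,
    (monotone_Iic.comp hu_mono.monotone).measure_iUnion (s := fun n => Iic (u n)),
    lt_iSup_iff] at h
  obtain ⟨n, hn⟩ := h
  exact ⟨u n, hu_lt n, hn⟩

lemma exists_lt_measure_Ici_of_lt_measure_Ioi [FirstCountableTopology α] [DenselyOrdered α]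
    [NoMaxOrder α] (ν : Measure α) {a : α} {c : ℝ≥0∞} (h : c < ν (Ioi a)) :
    ∃ s > a, c < ν (Ici s) :=
  exists_lt_measure_Iic_of_lt_measure_Iio (α := αᵒᵈ) ν h

variable [OpensMeasurableSpace α]

lemma exists_measure_Iic_lt [Nonempty α] [NoMinOrder α]
    [(atBot : Filter α).IsCountablyGenerated] {ν : Measure α} (hν : ∀ s, ν (Iic s) < ∞)
    {c : ℝ≥0∞} (hc : 0 < c) : ∃ s, ν (Iic s) < c := by
  have h := tendsto_measure_iInter_atBot (μ := ν) (fun s => measurableSet_Iic.nullMeasurableSet)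
    monotone_Iic ⟨Classical.arbitrary α, (hν _).ne⟩
  rw [iInter_Iic_eq_empty_iff.2 (by simp), measure_empty] at h
  exact (h.eventually (gt_mem_nhds hc)).exists

lemma exists_measure_Ici_lt [Nonempty α] [NoMaxOrder α]
    [(atTop : Filter α).IsCountablyGenerated] {ν : Measure α} (hν : ∀ s, ν (Ici s) < ∞)
    {c : ℝ≥0∞} (hc : 0 < c) : ∃ s, ν (Ici s) < c :=
  exists_measure_Iic_lt (α := αᵒᵈ) hν hc

lemma le_measure_Iic_of_forall_gt [FirstCountableTopology α] [DenselyOrdered α] [NoMaxOrder α]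
    {ν : Measure α} (hν : ∀ s, ν (Iic s) < ∞) {a : α} {c : ℝ≥0∞}
    (h : ∀ r > a, c ≤ ν (Iic r)) : c ≤ ν (Iic a) := by
  have hlim := tendsto_measure_biInter_gt (μ := ν) (s := Iic) (a := a)
    (fun r _ => measurableSet_Iic.nullMeasurableSet) (fun _ _ _ hij => Iic_subset_Iic.2 hij)
    (let ⟨r, hr⟩ := exists_gt a; ⟨r, hr, (hν r).ne⟩)
  have hinter : ⋂ r > a, Iic r = Iic a := by
    ext x
    simpa using ⟨le_of_forall_gt_imp_ge_of_dense, fun hx r hr => hx.trans hr.le⟩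
  rw [hinter] at hlim
  exact ge_of_tendsto hlim (eventually_nhdsWithin_of_forall h)

variable [SecondCountableTopology α] [BorelSpace α]

lemma MeasureTheory.Measure.ext_of_Iio_of_lt_top [NoMaxOrder α] {μ ν : Measure α}
    (hμ : ∀ a, μ (Iio a) < ∞) (h : ∀ a, μ (Iio a) = ν (Iio a)) : μ = ν := by
  refine Measure.ext_of_Ico' μ ν (fun a b _ => ?_) (fun a b hab => ?_)
  · exact ((measure_mono Ico_subset_Iio_self).trans_lt (hμ b)).ne
  · rw [← Iio_sdiff_Iio, measure_sdiff (Iio_subset_Iio hab.le) nullMeasurableSet_Iio (hμ a).ne,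
      measure_sdiff (Iio_subset_Iio hab.le) nullMeasurableSet_Iio (h a ▸ (hμ a).ne), h, h]

lemma MeasureTheory.Measure.ext_of_Ioi_of_lt_top [NoMinOrder α] {μ ν : Measure α}
    (hμ : ∀ a, μ (Ioi a) < ∞) (h : ∀ a, μ (Ioi a) = ν (Ioi a)) : μ = ν :=
  Measure.ext_of_Iio_of_lt_top (α := αᵒᵈ) hμ h

end OrderMeasure

lemma laverage_rpow_le {β : Type*} [MeasurableSpace β] {ν : Measure β} [IsFiniteMeasure ν]
    {p : ℝ} (hp : 1 ≤ p) {f : β → ℝ≥0∞} (hf : AEMeasurable f ν) :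
    (⨍⁻ a, f a ∂ν) ^ p ≤ ⨍⁻ a, f a ^ p ∂ν := by
  rcases eq_or_ne ν 0 with rfl | hν
  · simp [ENNReal.zero_rpow_of_pos (zero_lt_one.trans_le hp)]
  have : NeZero ν := ⟨hν⟩
  have hLp := eLpNorm'_le_eLpNorm'_of_exponent_le zero_lt_one hp ((ν univ)⁻¹ • ν)
    (hf.smul_measure _).aestronglyMeasurable
  simp only [eLpNorm', enorm_eq_self, ENNReal.rpow_one, div_one] at hLp
  rw [laverage_eq', laverage_eq']
  calc (∫⁻ a, f a ∂(ν univ)⁻¹ • ν) ^ p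
      ≤ ((∫⁻ a, f a ^ p ∂(ν univ)⁻¹ • ν) ^ (1 / p)) ^ p :=
        ENNReal.rpow_le_rpow hLp (zero_le_one.trans hp)
    _ = ∫⁻ a, f a ^ p ∂(ν univ)⁻¹ • ν := by
        rw [← ENNReal.rpow_mul, one_div_mul_cancel (zero_lt_one.trans_le hp).ne',
          ENNReal.rpow_one]

def posIio (c : ℝ≥0∞) : Set ℝ := {t | 0 < t ∧ ENNReal.ofReal t < c}

lemma measurableSet_posIio (c : ℝ≥0∞) : MeasurableSet (posIio c) :=
  measurableSet_Ioi.inter (measurableSet_lt ENNReal.measurable_ofReal measurable_const)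

lemma posIio_subset_Ioi (c : ℝ≥0∞) : posIio c ⊆ Ioi 0 := fun _ ht => ht.1

lemma posIio_mono {c d : ℝ≥0∞} (h : c ≤ d) : posIio c ⊆ posIio d :=
  fun _ ht => ⟨ht.1, ht.2.trans_le h⟩

lemma volume_posIio (c : ℝ≥0∞) : volume (posIio c) = c := by
  rcases eq_or_ne c ∞ with rfl | hc
  · have : posIio ∞ = Ioi 0 := by ext t; simp [posIio]
    rw [this, Real.volume_Ioi]
  · have : posIio c = Ioo 0 c.toReal := by
      ext t
      exact and_congr_right fun ht => ENNReal.ofReal_lt_iff_lt_toReal ht.le hc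
    rw [this, Real.volume_Ioo, sub_zero, ENNReal.ofReal_toReal hc]

def upperInverse (M : ℝ → ℝ≥0∞) (x : ℝ) : EReal :=
  sSup {e : EReal | ∃ y : ℝ, e = (y : EReal) ∧ ENNReal.ofReal x < M y}

section UpperInverse

variable {M : ℝ → ℝ≥0∞}

lemma coe_lt_upperInverse_iff {x y₀ : ℝ} :
    (y₀ : EReal) < upperInverse M x ↔ ∃ y, y₀ < y ∧ ENNReal.ofReal x < M y := by
  simp only [upperInverse, lt_sSup_iff, mem_ofPred_eq]
  constructor
  · rintro ⟨_, ⟨y, rfl, hy⟩, hlt⟩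
    exact ⟨y, EReal.coe_lt_coe_iff.1 hlt, hy⟩
  · rintro ⟨y, hlt, hy⟩
    exact ⟨y, ⟨y, rfl, hy⟩, EReal.coe_lt_coe_iff.2 hlt⟩

lemma antitone_upperInverse : Antitone (upperInverse M) := by
  intro x₁ x₂ h
  refine sSup_le_sSup ?_
  rintro _ ⟨y, rfl, hy⟩
  exact ⟨y, rfl, (ENNReal.ofReal_le_ofReal h).trans_lt hy⟩

variable {μ : Measure ℝ} (hmu : ∀ y, μ (Ici y) < ∞)
  (hM : ∀ y, μ (Ioi y) ≤ M y ∧ M y ≤ μ (Ici y))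
include hM

lemma volume_setOf_coe_lt_upperInverse (y₀ : ℝ) :
    volume {x | 0 < x ∧ (y₀ : EReal) < upperInverse M x} = μ (Ioi y₀) := by
  have hset : {x | 0 < x ∧ (y₀ : EReal) < upperInverse M x} = posIio (⨆ y > y₀, M y) := by
    ext x
    simp only [mem_ofPred_eq, posIio, coe_lt_upperInverse_iff, lt_iSup_iff, exists_prop]
  rw [hset, volume_posIio]
  refine le_antisymm (iSup₂_le fun y hy => (hM y).2.trans (measure_mono (Ici_subset_Ioi.2 hy)))
    (le_of_forall_lt fun c hc => ?_)
  obtain ⟨r, hr, hcr⟩ := exists_lt_measure_Ici_of_lt_measure_Ioi μ hc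
  obtain ⟨y, hy, hyr⟩ := exists_between hr
  exact (hcr.trans_le ((measure_mono (Ici_subset_Ioi.2 hyr)).trans (hM y).1)).trans_le
    (le_iSup₂ (f := fun y (_ : y > y₀) => M y) y hy)

include hmu in
lemma upperInverse_ne_top {x : ℝ} (hx : 0 < x) : upperInverse M x ≠ ⊤ := by
  intro htop
  obtain ⟨r, hr⟩ := exists_measure_Ici_lt hmu (ENNReal.ofReal_pos.2 hx)
  obtain ⟨y, hry, hy⟩ := coe_lt_upperInverse_iff.1 (htop ▸ EReal.coe_lt_top r)
  exact (hy.trans_le ((hM y).2.trans (measure_mono (Ici_subset_Ici.2 hry.le)))).not_gt hr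

include hmu in
lemma map_toReal_upperInverse :
    (volume.restrict (Ioi 0 ∩ {x | ⊥ < upperInverse M x})).map
      (fun x => (upperInverse M x).toReal) = μ := by
  have hmeas : Measurable (upperInverse M) := antitone_upperInverse.measurable
  refine (Measure.ext_of_Ioi_of_lt_top (fun y => ?_) (fun y => ?_)).symm
  · exact (measure_mono Ioi_subset_Ici_self).trans_lt (hmu y)
  rw [Measure.map_apply hmeas.ereal_toReal measurableSet_Ioi,
    Measure.restrict_apply (hmeas.ereal_toReal measurableSet_Ioi),
    ← volume_setOf_coe_lt_upperInverse hM]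
  congr 1
  ext x
  simp only [mem_inter_iff, mem_preimage, mem_Ioi, mem_ofPred_eq]
  by_cases hx : 0 < x
  · have hfin := upperInverse_ne_top hmu hM hx
    generalize upperInverse M x = e at hfin
    induction e using EReal.rec <;> simp_all
  · simp [hx]

include hmu in
lemma lintegral_comp_upperInverse {φ : EReal → ℝ≥0∞} (hφ : Measurable φ) (hφ_bot : φ ⊥ = 0) :
    ∫⁻ x in Ioi 0, φ (upperInverse M x) = ∫⁻ y, φ y ∂μ := by
  have hmeas : Measurable (upperInverse M) := antitone_upperInverse.measurable
  have hfin : MeasurableSet {x | ⊥ < upperInverse M x} := hmeas measurableSet_Ioi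
  calc ∫⁻ x in Ioi 0, φ (upperInverse M x)
      = ∫⁻ x in Ioi 0,
          {x | ⊥ < upperInverse M x}.indicator (fun x => φ (upperInverse M x)) x := by
        refine lintegral_congr fun x => ?_
        by_cases hx : ⊥ < upperInverse M x
        · exact (indicator_of_mem (s := {x | ⊥ < upperInverse M x}) hx
            (fun x => φ (upperInverse M x))).symm
        · rw [indicator_of_notMem (s := {x | ⊥ < upperInverse M x}) hx, not_bot_lt_iff.1 hx,
            hφ_bot]
    _ = ∫⁻ x in Ioi 0 ∩ {x | ⊥ < upperInverse M x}, φ ((upperInverse M x).toReal) := by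
        rw [setLIntegral_indicator hfin, inter_comm]
        refine setLIntegral_congr_fun (measurableSet_Ioi.inter hfin) fun x ⟨hx, hbot⟩ => ?_
        rw [EReal.coe_toReal (upperInverse_ne_top hmu hM hx) hbot.ne']
    _ = ∫⁻ y, φ y ∂μ := by
        conv_rhs => rw [← map_toReal_upperInverse hmu hM]
        exact (lintegral_map (f := fun y : ℝ => φ y) (hφ.comp measurable_coe_real_ereal)
          hmeas.ereal_toReal).symm

end UpperInverse

-- Only used on `posIio (lam univ)`, where the set below is nonempty and bounded below.
def quantile (lam : Measure ℝ) (u : ℝ) : ℝ := sInf {s | ENNReal.ofReal u < lam (Iic s)}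

section Quantile

variable {lam : Measure ℝ} (hlam : ∀ s, lam (Iic s) < ∞)
include hlam

lemma quantile_mem_iff {u : ℝ} (hu : u ∈ posIio (lam univ)) {D : Set ℝ} (hDo : IsOpen D)
    (hDl : IsLowerSet D) : quantile lam u ∈ D ↔ ENNReal.ofReal u < lam D := by
  set S := {s | ENNReal.ofReal u < lam (Iic s)}
  have hne : S.Nonempty :=
    ((tendsto_measure_Iic_atTop lam).eventually (lt_mem_nhds hu.2)).exists
  have hbdd : BddBelow S := by
    obtain ⟨r, hr⟩ := exists_measure_Iic_lt hlam (ENNReal.ofReal_pos.2 hu.1)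
    refine ⟨r, fun s hs => le_of_not_gt fun hsr => ?_⟩
    exact (hs.trans_le (measure_mono (Iic_subset_Iic.2 hsr.le))).not_gt hr
  constructor
  · intro hQ
    obtain ⟨a, hQa, haD⟩ := exists_Ico_subset_of_mem_nhds (hDo.mem_nhds hQ) (exists_gt _)
    obtain ⟨s, hs, hsa⟩ := (csInf_lt_iff hbdd hne).1 hQa
    exact hs.trans_le (measure_mono fun t ht => hDl ht (haD ⟨csInf_le hbdd hs, hsa⟩))
  · intro hlt
    by_contra hQ
    have hD : D ⊆ Iio (quantile lam u) := fun s hs => lt_of_not_ge fun h => hQ (hDl h hs)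
    obtain ⟨s, hs, hlt'⟩ :=
      exists_lt_measure_Iic_of_lt_measure_Iio lam (hlt.trans_le (measure_mono hD))
    exact (csInf_le hbdd hlt').not_gt hs

lemma posIio_inter_preimage_quantile {D : Set ℝ} (hDo : IsOpen D) (hDl : IsLowerSet D) :
    posIio (lam univ) ∩ quantile lam ⁻¹' D = posIio (lam D) := by
  ext u
  refine ⟨fun ⟨hu, hQ⟩ => ⟨hu.1, (quantile_mem_iff hlam hu hDo hDl).1 hQ⟩, fun hu => ?_⟩
  have hu' : u ∈ posIio (lam univ) := posIio_mono (measure_mono (subset_univ D)) hu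
  exact ⟨hu', (quantile_mem_iff hlam hu' hDo hDl).2 hu.2⟩

lemma monotoneOn_quantile : MonotoneOn (quantile lam) (posIio (lam univ)) := by
  intro u₁ hu₁ u₂ hu₂ h
  by_contra hlt
  have h₂ := (quantile_mem_iff hlam hu₂ isOpen_Iio (isLowerSet_Iio _)).1 (not_le.1 hlt)
  exact self_notMem_Iio ((quantile_mem_iff hlam hu₁ isOpen_Iio (isLowerSet_Iio _)).2
    ((ENNReal.ofReal_le_ofReal h).trans_lt h₂))

lemma measurable_domRestrict_quantile :
    Measurable ((posIio (lam univ)).domRestrict (quantile lam)) :=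
  Monotone.measurable fun u₁ u₂ h => monotoneOn_quantile hlam u₁.2 u₂.2 h

lemma measurableSet_posIio_inter_preimage_quantile {B : Set ℝ} (hB : MeasurableSet B) :
    MeasurableSet (posIio (lam univ) ∩ quantile lam ⁻¹' B) := by
  convert (measurableSet_posIio _).subtype_image (measurable_domRestrict_quantile hlam hB) using 1
  ext u
  simp [Set.domRestrict, and_comm]

lemma aemeasurable_quantile :
    AEMeasurable (quantile lam) (volume.restrict (posIio (lam univ))) :=
  aemeasurable_restrict_of_monotoneOn (measurableSet_posIio _) (monotoneOn_quantile hlam)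

lemma map_quantile : (volume.restrict (posIio (lam univ))).map (quantile lam) = lam := by
  refine (Measure.ext_of_Iio_of_lt_top (fun a => ?_) (fun a => ?_)).symm
  · exact (measure_mono Iio_subset_Iic_self).trans_lt (hlam a)
  rw [Measure.map_apply_of_aemeasurable (aemeasurable_quantile hlam) measurableSet_Iio,
    Measure.restrict_apply' (measurableSet_posIio _), inter_comm,
    posIio_inter_preimage_quantile hlam isOpen_Iio (isLowerSet_Iio _), volume_posIio]

lemma volume_posIio_inter_preimage_quantile {B : Set ℝ} (hB : MeasurableSet B) :
    volume (posIio (lam univ) ∩ quantile lam ⁻¹' B) = lam B := by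
  conv_rhs => rw [← map_quantile hlam]
  rw [Measure.map_apply_of_aemeasurable (aemeasurable_quantile hlam) hB,
    Measure.restrict_apply' (measurableSet_posIio _), inter_comm]

lemma setLIntegral_eq_setLIntegral_quantile {B : Set ℝ} (hB : MeasurableSet B) {G : ℝ → ℝ≥0∞}
    (hG : Measurable G) :
    ∫⁻ s in B, G s ∂lam
      = ∫⁻ u in posIio (lam univ) ∩ quantile lam ⁻¹' B, G (quantile lam u) := by
  conv_lhs => rw [← map_quantile hlam]
  rw [Measure.restrict_map_of_aemeasurable (aemeasurable_quantile hlam) hB,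
    lintegral_map' hG.aemeasurable ((aemeasurable_quantile hlam).mono_measure
      Measure.restrict_le_self),
    Measure.restrict_restrict' (measurableSet_posIio _), inter_comm]

lemma toReal_measure_Iio_quantile {u : ℝ} (hu : u ∈ posIio (lam univ))
    (hatom : lam {quantile lam u} = 0) : (lam (Iio (quantile lam u))).toReal = u := by
  have hle : lam (Iio (quantile lam u)) ≤ ENNReal.ofReal u := not_lt.1 fun h =>
    self_notMem_Iio ((quantile_mem_iff hlam hu isOpen_Iio (isLowerSet_Iio _)).2 h)
  have hge : ENNReal.ofReal u ≤ lam (Iic (quantile lam u)) := le_measure_Iic_of_forall_gt hlam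
    fun r hr => ((quantile_mem_iff hlam hu isOpen_Iio (isLowerSet_Iio _)).1 hr).le.trans
      (measure_mono Iio_subset_Iic_self)
  rw [← measure_congr (Iio_ae_eq_Iic' hatom)] at hge
  rw [le_antisymm hle hge, ENNReal.toReal_ofReal hu.1.le]

end Quantile

-- At an atom `s` the quantile is constant on an interval of length `lam {s}`, over which `f` is
-- averaged; off the atoms, `s ↦ (lam (Iio s)).toReal` inverts the quantile.
def quantileAvg (lam : Measure ℝ) (f : ℝ → ℝ≥0∞) (s : ℝ) : ℝ≥0∞ :=
  if lam {s} = 0 then f (lam (Iio s)).toReal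
  else ⨍⁻ u in posIio (lam univ) ∩ quantile lam ⁻¹' {s}, f u ∂volume

section QuantileAvg

variable {lam : Measure ℝ} (hlam : ∀ s, lam (Iic s) < ∞)
include hlam

lemma countable_setOf_measure_singleton_ne_zero : {s | lam {s} ≠ 0}.Countable := by
  have : IsLocallyFiniteMeasure lam :=
    ⟨fun x => ⟨Iic (x + 1), Iic_mem_nhds (lt_add_one x), hlam _⟩⟩
  simpa [pos_iff_ne_zero] using Measure.countable_meas_level_set_pos (μ := lam) measurable_id

lemma measurable_toReal_measure_Iio : Measurable fun s => (lam (Iio s)).toReal :=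
  Monotone.measurable fun _ b h => ENNReal.toReal_mono
    ((measure_mono Iio_subset_Iic_self).trans_lt (hlam b)).ne (measure_mono (Iio_subset_Iio h))

lemma measurable_quantileAvg {f : ℝ → ℝ≥0∞} (hf : Measurable f) :
    Measurable (quantileAvg lam f) :=
  (hf.comp (measurable_toReal_measure_Iio hlam)).measurable_of_countable_ne <|
    (countable_setOf_measure_singleton_ne_zero hlam).mono fun _ hs h => hs (if_pos h).symm

lemma setLIntegral_eq_add_tsum_atoms (B : Set ℝ) (G : ℝ → ℝ≥0∞) :
    ∫⁻ s in B, G s ∂lam = ∫⁻ s in B \ {s | lam {s} ≠ 0}, G s ∂lam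
      + ∑' s : ↥(B ∩ {s | lam {s} ≠ 0}), G s * lam {(s : ℝ)} := by
  have hA := countable_setOf_measure_singleton_ne_zero hlam
  rw [← lintegral_inter_add_sdiff G B hA.measurableSet, add_comm,
    lintegral_countable G (hA.mono inter_subset_right)]

lemma setLIntegral_posIio_inter_preimage_quantile {B : Set ℝ} (hB : MeasurableSet B)
    {F : ℝ → ℝ≥0∞} (hF : Measurable F) :
    ∫⁻ u in posIio (lam univ) ∩ quantile lam ⁻¹' B, F u
      = ∫⁻ s in B \ {s | lam {s} ≠ 0}, F (lam (Iio s)).toReal ∂lam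
        + ∑' s : ↥(B ∩ {s | lam {s} ≠ 0}),
            ∫⁻ u in posIio (lam univ) ∩ quantile lam ⁻¹' {(s : ℝ)}, F u := by
  set A := {s | lam {s} ≠ 0}
  have hA := countable_setOf_measure_singleton_ne_zero hlam
  have : Countable ↥(B ∩ A) := (hA.mono inter_subset_right).to_subtype
  have hsplit : posIio (lam univ) ∩ quantile lam ⁻¹' B
      = (posIio (lam univ) ∩ quantile lam ⁻¹' (B \ A))
        ∪ ⋃ s : ↥(B ∩ A), posIio (lam univ) ∩ quantile lam ⁻¹' {(s : ℝ)} := by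
    ext u
    by_cases hu : quantile lam u ∈ A <;> simp [hu]
  have hmeas := fun {B} (hB : MeasurableSet B) =>
    measurableSet_posIio_inter_preimage_quantile hlam hB
  rw [hsplit, lintegral_union (MeasurableSet.iUnion fun _ => hmeas (measurableSet_singleton _)),
    lintegral_iUnion (fun _ => hmeas (measurableSet_singleton _))]
  · congr 1
    rw [setLIntegral_eq_setLIntegral_quantile hlam (hB.diff hA.measurableSet)
      (G := fun s => F (lam (Iio s)).toReal) (hF.comp (measurable_toReal_measure_Iio hlam))]
    refine setLIntegral_congr_fun (hmeas (hB.diff hA.measurableSet)) fun u ⟨hu, hQ⟩ => ?_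
    rw [toReal_measure_Iio_quantile hlam hu (not_not.1 hQ.2)]
  · exact fun s t hst => disjoint_left.2 fun u hs ht =>
      hst (Subtype.ext ((mem_singleton_iff.1 hs.2).symm.trans (mem_singleton_iff.1 ht.2)))
  · exact disjoint_iUnion_right.2 fun s => disjoint_left.2 fun u hu hs =>
      hu.2.2 ((mem_singleton_iff.1 hs.2) ▸ s.2.2)

lemma volume_posIio_inter_preimage_quantile_singleton_ne_top (s : ℝ) :
    volume (posIio (lam univ) ∩ quantile lam ⁻¹' {s}) ≠ ∞ := by
  rw [volume_posIio_inter_preimage_quantile hlam (measurableSet_singleton s)]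
  exact ((measure_mono (singleton_subset_iff.2 (mem_Iic.2 le_rfl))).trans_lt (hlam s)).ne

lemma setLIntegral_quantileAvg {f : ℝ → ℝ≥0∞} (hf : Measurable f) {B : Set ℝ}
    (hB : MeasurableSet B) :
    ∫⁻ s in B, quantileAvg lam f s ∂lam
      = ∫⁻ u in posIio (lam univ) ∩ quantile lam ⁻¹' B, f u := by
  rw [setLIntegral_eq_add_tsum_atoms hlam,
    setLIntegral_posIio_inter_preimage_quantile hlam hB hf]
  congr 1
  · refine setLIntegral_congr_fun
      (hB.diff (countable_setOf_measure_singleton_ne_zero hlam).measurableSet) fun s hs => ?_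
    exact if_pos (not_not.1 hs.2)
  · refine tsum_congr fun s => ?_
    rw [quantileAvg, if_neg s.2.2,
      ← volume_posIio_inter_preimage_quantile hlam (measurableSet_singleton _), mul_comm,
      measure_mul_setLAverage _ (volume_posIio_inter_preimage_quantile_singleton_ne_top hlam _)]

lemma lintegral_quantileAvg_rpow_le {f : ℝ → ℝ≥0∞} (hf : Measurable f) {p : ℝ} (hp : 1 ≤ p) :
    ∫⁻ s, quantileAvg lam f s ^ p ∂lam ≤ ∫⁻ u in posIio (lam univ), f u ^ p := by
  have hdecomp := setLIntegral_posIio_inter_preimage_quantile hlam MeasurableSet.univ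
    (hf.pow_const p)
  rw [preimage_univ, inter_univ] at hdecomp
  rw [hdecomp, ← setLIntegral_univ, setLIntegral_eq_add_tsum_atoms hlam]
  refine add_le_add (setLIntegral_congr_fun
      (MeasurableSet.univ.diff (countable_setOf_measure_singleton_ne_zero hlam).measurableSet)
      fun s hs => ?_).le (ENNReal.tsum_le_tsum fun s => ?_)
  · rw [quantileAvg, if_pos (not_not.1 hs.2)]
  · have hfin := volume_posIio_inter_preimage_quantile_singleton_ne_top hlam s
    have : IsFiniteMeasure
        (volume.restrict (posIio (lam univ) ∩ quantile lam ⁻¹' {(s : ℝ)})) :=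
      isFiniteMeasure_restrict.2 hfin
    rw [quantileAvg, if_neg s.2.2,
      ← volume_posIio_inter_preimage_quantile hlam (measurableSet_singleton _), mul_comm,
      ← measure_mul_setLAverage _ hfin]
    gcongr
    exact laverage_rpow_le hp hf.aemeasurable

end QuantileAvg

section Transplant

variable {lam : Measure ℝ} (hlam : ∀ s, lam (Iic s) < ∞)
include hlam

lemma measurable_indicator_comp_quantile {g : ℝ → ℝ≥0∞} (hg : Measurable g) :
    Measurable ((posIio (lam univ)).indicator fun u => g (quantile lam u)) := by
  refine measurable_of_restrict_of_restrict_compl (s := posIio (lam univ))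
    (measurableSet_posIio _) ?_ ?_
  · convert hg.comp (measurable_domRestrict_quantile hlam) using 1
    funext u
    exact indicator_of_mem u.2 _
  · convert measurable_const (a := (0 : ℝ≥0∞)) using 1
    funext u
    exact indicator_of_notMem u.2 _

lemma exists_transplant_eq {g : ℝ → ℝ≥0∞} (hg : Measurable g) {p : ℝ} (hp : 0 < p) :
    ∃ f : ℝ → ℝ≥0∞, Measurable f ∧ ∫⁻ t in Ioi 0, f t ^ p = ∫⁻ s, g s ^ p ∂lam ∧
      ∀ D : Set ℝ, IsOpen D → IsLowerSet D →
        ∫⁻ t in posIio (lam D), f t = ∫⁻ s in D, g s ∂lam := by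
  set f := (posIio (lam univ)).indicator fun u => g (quantile lam u)
  refine ⟨f, measurable_indicator_comp_quantile hlam hg, ?_, fun D hDo hDl => ?_⟩
  · have hfp : (fun t => f t ^ p)
        = (posIio (lam univ)).indicator fun u => g (quantile lam u) ^ p :=
      (indicator_comp_of_zero (g := fun a : ℝ≥0∞ => a ^ p) (ENNReal.zero_rpow_of_pos hp)).symm
    have htransfer := setLIntegral_eq_setLIntegral_quantile hlam MeasurableSet.univ
      (hg.pow_const p)
    rw [Measure.restrict_univ, preimage_univ, inter_univ] at htransfer
    rw [hfp, setLIntegral_indicator (measurableSet_posIio _),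
      inter_eq_left.2 (posIio_subset_Ioi _), htransfer]
  · rw [← posIio_inter_preimage_quantile hlam hDo hDl,
      setLIntegral_eq_setLIntegral_quantile hlam hDo.measurableSet hg]
    exact setLIntegral_congr_fun (measurableSet_posIio_inter_preimage_quantile hlam
      hDo.measurableSet) fun u hu => indicator_of_mem hu.1 _

lemma exists_transplant_le {f : ℝ → ℝ≥0∞} (hf : Measurable f) {p : ℝ} (hp : 1 ≤ p) :
    ∃ g : ℝ → ℝ≥0∞, Measurable g ∧ ∫⁻ s, g s ^ p ∂lam ≤ ∫⁻ t in Ioi 0, f t ^ p ∧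
      ∀ D : Set ℝ, IsOpen D → IsLowerSet D →
        ∫⁻ t in posIio (lam D), f t = ∫⁻ s in D, g s ∂lam := by
  refine ⟨quantileAvg lam f, measurable_quantileAvg hlam hf,
    (lintegral_quantileAvg_rpow_le hlam hf hp).trans (lintegral_mono_set (posIio_subset_Ioi _)),
    fun D hDo hDl => ?_⟩
  rw [← posIio_inter_preimage_quantile hlam hDo hDl,
    setLIntegral_quantileAvg hlam hf hDo.measurableSet]

end Transplant

lemma lintegral_hardyOp_rpow_eq {lam μ : Measure ℝ} {M : ℝ → ℝ≥0∞}
    (hmu : ∀ y, μ (Ici y) < ∞) (hM : ∀ y, μ (Ioi y) ≤ M y ∧ M y ≤ μ (Ici y))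
    {q : ℝ} (hq : 0 < q) {f g : ℝ → ℝ≥0∞}
    (hfg : ∀ D : Set ℝ, IsOpen D → IsLowerSet D →
      ∫⁻ t in posIio (lam D), f t = ∫⁻ s in D, g s ∂lam) :
    ∫⁻ x in Ioi 0, hardyOp (fun x => lam {s : ℝ | (s : EReal) < upperInverse M x}) f x ^ q
      = ∫⁻ y, (∫⁻ s in Iio y, g s ∂lam) ^ q ∂μ := by
  have hopen (e : EReal) : IsOpen {s : ℝ | (s : EReal) < e} :=
    isOpen_lt continuous_coe_real_ereal continuous_const
  have hlower (e : EReal) : IsLowerSet {s : ℝ | (s : EReal) < e} :=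
    fun _ _ hba ha => (EReal.coe_le_coe_iff.2 hba).trans_lt ha
  set φ : EReal → ℝ≥0∞ := fun e => (∫⁻ s in {s : ℝ | (s : EReal) < e}, g s ∂lam) ^ q
  have hφ : Monotone φ := fun e e' h =>
    ENNReal.rpow_le_rpow (lintegral_mono_set fun s hs => lt_of_lt_of_le hs h) hq.le
  have hφ_bot : φ ⊥ = 0 := by simp [φ, hq]
  have hIio (y : ℝ) : {s : ℝ | (s : EReal) < y} = Iio y := by ext; simp
  calc ∫⁻ x in Ioi 0, hardyOp (fun x => lam {s : ℝ | (s : EReal) < upperInverse M x}) f x ^ q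
      = ∫⁻ x in Ioi 0, φ (upperInverse M x) :=
        lintegral_congr fun x => congrArg (· ^ q) (hfg _ (hopen _) (hlower _))
    _ = ∫⁻ y, φ y ∂μ := lintegral_comp_upperInverse hmu hM hφ.measurable hφ_bot
    _ = ∫⁻ y, (∫⁻ s in Iio y, g s ∂lam) ^ q ∂μ := by simp only [φ, hIio]

/-- The normal form parameter of a Hardy inequality with general
Borel measures on `ℝ` (open lower intervals) is `Λ⁻ ∘ M⁻¹`. -/
theorem normal_form_parameter_measures (p q : ℝ) (hp : 1 < p) (hq : 0 < q)
    (lam μ : Measure ℝ)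
    (hlam : ∀ s : ℝ, lam (Iic s) < ∞) (hmu : ∀ y : ℝ, μ (Ici y) < ∞)
    (M : ℝ → ℝ≥0∞)
    (hM : ∀ y : ℝ, μ (Ioi y) ≤ M y ∧ M y ≤ μ (Ici y))
    (Minv : ℝ → EReal)
    (hMinv : ∀ x : ℝ,
      Minv x = sSup {e : EReal | ∃ y : ℝ, e = (y : EReal) ∧ ENNReal.ofReal x < M y})
    (b : ℝ → ℝ≥0∞)
    (hb : ∀ x : ℝ, b x = lam {s : ℝ | (s : EReal) < Minv x}) :
    AntitoneOn b (Ioi 0) ∧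
    ∀ C : ℝ≥0∞,
      ((∀ g : ℝ → ℝ≥0∞, Measurable g →
          (∫⁻ y : ℝ, (∫⁻ s in Iio y, g s ∂lam) ^ q ∂μ) ^ (1/q) ≤
            C * (∫⁻ s : ℝ, g s ^ p ∂lam) ^ (1/p)) ↔
        (∀ f : ℝ → ℝ≥0∞, Measurable f →
          (∫⁻ x in Ioi (0:ℝ), hardyOp b f x ^ q) ^ (1/q) ≤
            C * (∫⁻ t in Ioi (0:ℝ), f t ^ p) ^ (1/p))) := by
  obtain rfl : Minv = upperInverse M := funext hMinv
  obtain rfl : b = fun x => lam {s : ℝ | (s : EReal) < upperInverse M x} := funext hb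
  refine ⟨fun x₁ _ x₂ _ h => measure_mono fun s hs => hs.trans_le (antitone_upperInverse h),
    fun C => ⟨fun hmeas f hf => ?_, fun hnf g hg => ?_⟩⟩
  · obtain ⟨g, hg, hgp, hfg⟩ := exists_transplant_le hlam hf hp.le
    rw [lintegral_hardyOp_rpow_eq hmu hM hq hfg]
    exact (hmeas g hg).trans (by gcongr)
  · obtain ⟨f, hf, hfp, hfg⟩ := exists_transplant_eq hlam hg (zero_lt_one.trans hp)
    rw [← lintegral_hardyOp_rpow_eq hmu hM hq hfg, ← hfp]
    exact hnf f hf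
end
end

section
/- Let 1 < p < ∞ and 0 < q < ∞. Suppose (u_n)_{n∈ℤ} and (w_k)_{k∈ℤ} are two-sided sequences of non-negative real numbers such that U_n := Σ_{k≤n} u_k < ∞ for all n ∈ ℤ and W_n := Σ_{k≥n} w_k < ∞ for all n ∈ ℤ. Let b : (0,∞) → [0,∞) be the step function taking the value W_n on the interval [U_{n−1}, U_n) for each n ∈ ℤ and the value 0 elsewhere on (0,∞). Then for every constant C ∈ [0,∞], the discrete Hardy inequality (Σ_{n∈ℤ} (Σ_{k=n}^∞ g_k w_k)^q u_n)^{1/q} ≤ C (Σ_{k∈ℤ} g_k^p w_k)^{1/p} holds for all non-negative sequences (g_k)_{k∈ℤ} if and only if ‖H_b f‖_{L^q(0,∞)} ≤ C‖f‖_{L^p(0,∞)} holds for all nonnegative Lebesgue-measurable f on (0,∞); that is, b is the normal form parameter of this discrete Hardy inequality. -/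
open MeasureTheory Set Filter Topology
open scoped ENNReal

noncomputable section

/-!
The `x`-axis splits into the intervals `[U (n-1), U n)` of length `u n`, on which `b = W n`, and
the `y`-axis into the intervals `D k = [W (k+1), W k)` of length `w k`. Since `W k → 0`, the
interval `(0, W n)` is the disjoint union of the `D k` with `n ≤ k`, so
`‖H_b f‖_q^q = ∑ₙ (∑_{k ≥ n} g k * w k)^q * u n` where `g k` is the mean of `f` over `D k`.
By Jensen's inequality `∑ₖ (g k)^p * w k ≤ ‖f‖_p^p`, with equality when `f` is the step function
equal to `g k` on `D k`.
-/

open scoped Function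

theorem tsum_ite_le_eq_add (v : ℤ → ℝ≥0∞) (n : ℤ) :
    ∑' k, (if k ≤ n then v k else 0) = (∑' k, if k ≤ n - 1 then v k else 0) + v n := by
  rw [ENNReal.tsum_eq_add_tsum_ite n, if_pos le_rfl, add_comm]
  congr 1
  refine tsum_congr fun k => ?_
  split_ifs <;> first | rfl | omega

theorem tsum_ite_ge_eq_add (v : ℤ → ℝ≥0∞) (n : ℤ) :
    ∑' k, (if n ≤ k then v k else 0) = (∑' k, if n + 1 ≤ k then v k else 0) + v n := by
  rw [ENNReal.tsum_eq_add_tsum_ite n, if_pos le_rfl, add_comm]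
  congr 1
  refine tsum_congr fun k => ?_
  split_ifs <;> first | rfl | omega

theorem tsum_ite_ge_eq_tsum_nat (v : ℤ → ℝ≥0∞) (n : ℤ) :
    ∑' k, (if n ≤ k then v k else 0) = ∑' m : ℕ, v (n + m) := by
  have hinj : Function.Injective fun m : ℕ => n + m := fun i j h => by simpa using h
  have hsupp : Function.support (fun k => if n ≤ k then v k else 0) ⊆ range fun m : ℕ => n + m := by
    intro k hk
    have hnk : n ≤ k := by by_contra h; simp [h] at hk
    exact ⟨(k - n).toNat, by simp only; omega⟩
  rw [← hinj.tsum_eq hsupp]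
  simp

theorem exists_tsum_ite_ge_lt {v : ℤ → ℝ≥0∞} {n₀ : ℤ}
    (hv : ∑' k, (if n₀ ≤ k then v k else 0) ≠ ∞) {ε : ℝ≥0∞} (hε : 0 < ε) :
    ∃ n, ∑' k, (if n ≤ k then v k else 0) < ε := by
  simp_rw [tsum_ite_ge_eq_tsum_nat] at hv ⊢
  obtain ⟨i, hi⟩ := ((ENNReal.tendsto_sum_nat_add _ hv).eventually_lt_const hε).exists
  refine ⟨n₀ + i, ?_⟩
  convert hi using 3
  push_cast
  ring_nf

theorem tsum_indicator_const_apply_of_mem {α ι : Type*} {D : ι → Set α}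
    (hdisj : Pairwise (Disjoint on D)) (g : ι → ℝ≥0∞) {i : ι} {x : α} (hx : x ∈ D i) :
    ∑' j, (D j).indicator (fun _ => g j) x = g i :=
  (tsum_eq_single i fun _ hj => indicator_of_notMem (disjoint_left.mp (hdisj hj).symm hx) _).trans
    (indicator_of_mem hx _)

section Partition

variable {α ι : Type*} [MeasurableSpace α] {μ : Measure α} {D : ι → Set α}

theorem lintegral_le_lintegral_rpow_mul_measure_univ {p : ℝ} (hp : 1 ≤ p) {f : α → ℝ≥0∞}
    (hf : AEMeasurable f μ) :
    ∫⁻ x, f x ∂μ ≤ (∫⁻ x, f x ^ p ∂μ) ^ (1 / p) * μ univ ^ (1 - 1 / p) := by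
  simpa [eLpNorm'_eq_lintegral_enorm] using
    eLpNorm'_le_eLpNorm'_mul_rpow_measure_univ one_pos hp hf.aestronglyMeasurable

theorem lintegral_div_measure_univ_rpow_mul_le {p : ℝ} (hp : 1 ≤ p) {f : α → ℝ≥0∞}
    (hf : AEMeasurable f μ) (hμ : μ univ ≠ ∞) :
    ((∫⁻ x, f x ∂μ) / μ univ) ^ p * μ univ ≤ ∫⁻ x, f x ^ p ∂μ := by
  rcases eq_or_ne (μ univ) 0 with h0 | h0
  · simp [h0]
  have hp0 : 0 < p := by linarith
  calc ((∫⁻ x, f x ∂μ) / μ univ) ^ p * μ univ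
      ≤ ((∫⁻ x, f x ^ p ∂μ) ^ (1 / p) * μ univ ^ (1 - 1 / p) / μ univ) ^ p * μ univ := by
        gcongr
        exact lintegral_le_lintegral_rpow_mul_measure_univ hp hf
    _ = ∫⁻ x, f x ^ p ∂μ := by
        have he : (-1 + (1 - 1 / p)) * p = -1 := by field_simp; ring
        rw [mul_div_assoc, ENNReal.div_eq_inv_mul, ← ENNReal.rpow_neg_one,
          ← ENNReal.rpow_add _ _ h0 hμ, ENNReal.mul_rpow_of_nonneg _ _ hp0.le, ← ENNReal.rpow_mul,
          ← ENNReal.rpow_mul, one_div_mul_cancel hp0.ne', he, ENNReal.rpow_one,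
          ENNReal.rpow_neg_one, mul_assoc, ENNReal.inv_mul_cancel h0 hμ, mul_one]

theorem setLIntegral_div_measure_mul {s : Set α} (hs : μ s ≠ ∞) (f : α → ℝ≥0∞) :
    (∫⁻ x in s, f x ∂μ) / μ s * μ s = ∫⁻ x in s, f x ∂μ := by
  rcases eq_or_ne (μ s) 0 with h0 | h0
  · simp [setLIntegral_measure_zero s f h0, h0]
  · exact ENNReal.div_mul_cancel h0 hs

theorem setLIntegral_tsum_indicator_const (hD : ∀ i, MeasurableSet (D i))
    (hdisj : Pairwise (Disjoint on D)) (g : ι → ℝ≥0∞) (i : ι) :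
    ∫⁻ x in D i, ∑' j, (D j).indicator (fun _ => g j) x ∂μ = g i * μ (D i) := by
  rw [setLIntegral_congr_fun (hD i) fun x hx => tsum_indicator_const_apply_of_mem hdisj g hx,
    setLIntegral_const]

variable [Countable ι]

theorem lintegral_eq_tsum_mul_of_eqOn (hD : ∀ i, MeasurableSet (D i))
    (hdisj : Pairwise (Disjoint on D)) {φ : α → ℝ≥0∞} {c : ι → ℝ≥0∞}
    (hφ : ∀ i, EqOn φ (fun _ => c i) (D i)) (hφ0 : ∀ᵐ x ∂μ, x ∉ ⋃ i, D i → φ x = 0) :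
    ∫⁻ x, φ x ∂μ = ∑' i, c i * μ (D i) := by
  calc ∫⁻ x, φ x ∂μ = ∫⁻ x in ⋃ i, D i, φ x ∂μ := by
        rw [← lintegral_indicator (MeasurableSet.iUnion hD)]
        refine lintegral_congr_ae (hφ0.mono fun x hx => ?_)
        by_cases hmem : x ∈ ⋃ i, D i
        · rw [indicator_of_mem hmem]
        · rw [indicator_of_notMem hmem, hx hmem]
    _ = ∑' i, ∫⁻ x in D i, φ x ∂μ := lintegral_iUnion hD hdisj φ
    _ = ∑' i, c i * μ (D i) :=
        tsum_congr fun i => by rw [setLIntegral_congr_fun (hD i) (hφ i), setLIntegral_const]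

theorem tsum_setLIntegral_div_rpow_mul_le (hD : ∀ i, MeasurableSet (D i))
    (hdisj : Pairwise (Disjoint on D)) (hfin : ∀ i, μ (D i) ≠ ∞) {p : ℝ} (hp : 1 ≤ p)
    {f : α → ℝ≥0∞} (hf : AEMeasurable f μ) :
    ∑' i, ((∫⁻ x in D i, f x ∂μ) / μ (D i)) ^ p * μ (D i) ≤ ∫⁻ x, f x ^ p ∂μ :=
  calc ∑' i, ((∫⁻ x in D i, f x ∂μ) / μ (D i)) ^ p * μ (D i)
      ≤ ∑' i, ∫⁻ x in D i, f x ^ p ∂μ := ENNReal.tsum_le_tsum fun i => by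
        simpa using lintegral_div_measure_univ_rpow_mul_le (μ := μ.restrict (D i)) hp hf.restrict
          (by simpa using hfin i)
    _ = ∫⁻ x in ⋃ i, D i, f x ^ p ∂μ := (lintegral_iUnion hD hdisj _).symm
    _ ≤ ∫⁻ x, f x ^ p ∂μ := setLIntegral_le_lintegral _ _

theorem lintegral_tsum_indicator_const_rpow (hD : ∀ i, MeasurableSet (D i))
    (hdisj : Pairwise (Disjoint on D)) {p : ℝ} (hp : 0 < p) (g : ι → ℝ≥0∞) :
    ∫⁻ x, (∑' i, (D i).indicator (fun _ => g i) x) ^ p ∂μ = ∑' i, g i ^ p * μ (D i) := by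
  refine lintegral_eq_tsum_mul_of_eqOn hD hdisj
    (fun i x hx => by simp only [tsum_indicator_const_apply_of_mem hdisj g hx]) (ae_of_all _ ?_)
  intro x hx
  rw [ENNReal.tsum_eq_zero.mpr fun i => indicator_of_notMem (fun h => hx (mem_iUnion_of_mem i h)) _,
    ENNReal.zero_rpow_of_pos hp]

end Partition

theorem volume_restrict_Ioi_Ico {a x : ℝ} (hax : a ≤ x) (y : ℝ) :
    volume.restrict (Ioi a) (Ico x y) = ENNReal.ofReal (y - x) := by
  rw [Measure.restrict_congr_set Ioi_ae_eq_Ici, Measure.restrict_apply measurableSet_Ico,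
    inter_eq_self_of_subset_left (Ico_subset_Ici_self.trans (Ici_subset_Ici.mpr hax)),
    Real.volume_Ico]

theorem Antitone.biUnion_Ico_inter_Ioi {β : Type*} [LinearOrder β] {A : ℤ → β}
    (hA : Antitone A) {a : β} (hlim : ∀ t, a < t → ∃ k, A k ≤ t) (n : ℤ) :
    (⋃ k ∈ Ici n, Ico (A (k + 1)) (A k)) ∩ Ioi a = Ioo a (A n) := by
  ext t
  simp only [mem_inter_iff, mem_iUnion, mem_Ici, mem_Ico, mem_Ioi, mem_Ioo, exists_prop]
  constructor
  · rintro ⟨⟨k, hnk, -, htk⟩, hat⟩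
    exact ⟨hat, htk.trans_le (hA hnk)⟩
  · rintro ⟨hat, htn⟩
    have hbdd : ∀ k, A k ≤ t → n + 1 ≤ k := fun k hk =>
      not_lt.mp fun hkn => (htn.trans_le (hA (Int.lt_add_one_iff.mp hkn))).not_ge hk
    obtain ⟨m, hm, hmin⟩ := Int.exists_least_of_bdd ⟨n + 1, hbdd⟩ (hlim t hat)
    refine ⟨⟨m - 1, by linarith [hbdd m hm], by rwa [sub_add_cancel], ?_⟩, hat⟩
    exact not_le.mp fun h => by linarith [hmin _ h]

theorem Antitone.setLIntegral_Ioo_eq_tsum {A : ℤ → ℝ} (hA : Antitone A) {a : ℝ}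
    (hlim : ∀ t, a < t → ∃ k, A k ≤ t) (μ : Measure ℝ) (f : ℝ → ℝ≥0∞) (n : ℤ) :
    ∫⁻ t in Ioo a (A n), f t ∂μ =
      ∑' k, if n ≤ k then ∫⁻ t in Ico (A (k + 1)) (A k), f t ∂(μ.restrict (Ioi a)) else 0 := by
  have hdisj : Pairwise (Disjoint on fun k => Ico (A (k + 1)) (A k)) := by
    simpa [Order.succ_eq_add_one] using hA.pairwise_disjoint_on_Ico_succ
  rw [← hA.biUnion_Ico_inter_Ioi hlim n, ← Measure.restrict_restrict
      (MeasurableSet.biUnion (to_countable _) fun _ _ => measurableSet_Ico),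
    lintegral_biUnion (to_countable _) (fun _ _ => measurableSet_Ico) (hdisj.set_pairwise _),
    tsum_subtype (Ici n) fun k => ∫⁻ t in Ico (A (k + 1)) (A k), f t ∂(μ.restrict (Ioi a))]
  simp only [indicator_apply, mem_Ici]

theorem hardyOp_of_eq_ofReal {b : ℝ → ℝ≥0∞} {x a : ℝ} (hb : b x = ENNReal.ofReal a)
    (f : ℝ → ℝ≥0∞) : hardyOp b f x = ∫⁻ t in Ioo 0 a, f t := by
  have hset : {t : ℝ | 0 < t ∧ ENNReal.ofReal t < b x} = Ioo 0 a := by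
    ext t
    simp only [mem_ofPred_eq, mem_Ioo, hb]
    exact and_congr_right fun ht => ENNReal.ofReal_lt_ofReal_iff_of_nonneg ht.le
  rw [hardyOp, hset]

theorem lintegral_hardyOp_rpow_eq_tsum {q : ℝ} (hq : 0 < q) {A c : ℤ → ℝ} (hA : Antitone A)
    (hlim : ∀ t, 0 < t → ∃ k, A k ≤ t) (hc : Monotone c) (hc0 : ∀ n, 0 ≤ c n)
    {b : ℝ → ℝ≥0∞}
    (hb1 : ∀ n x, c (n - 1) ≤ x → x < c n → b x = ENNReal.ofReal (A n))
    (hb2 : ∀ x, 0 < x → (∀ n, ¬ (c (n - 1) ≤ x ∧ x < c n)) → b x = 0) (f : ℝ → ℝ≥0∞) :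
    ∫⁻ x in Ioi 0, hardyOp b f x ^ q =
      ∑' n, (∑' k, if n ≤ k then ∫⁻ t in Ico (A (k + 1)) (A k), f t ∂(volume.restrict (Ioi 0))
        else 0) ^ q * ENNReal.ofReal (c n - c (n - 1)) := by
  have hdisj : Pairwise (Disjoint on fun n => Ico (c (n - 1)) (c n)) := by
    simpa [Order.pred_eq_sub_one] using hc.pairwise_disjoint_on_Ico_pred
  rw [lintegral_eq_tsum_mul_of_eqOn (fun _ => measurableSet_Ico) hdisj
    (c := fun n => (∫⁻ t in Ioo 0 (A n), f t) ^ q)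
    (fun n x hx => by rw [hardyOp_of_eq_ofReal (hb1 n x hx.1 hx.2)])]
  · exact tsum_congr fun n => by
      rw [hA.setLIntegral_Ioo_eq_tsum hlim, volume_restrict_Ioi_Ico (hc0 _)]
  · refine ae_restrict_of_forall_mem measurableSet_Ioi fun x hx hxE => ?_
    have hbx : b x = 0 := hb2 x hx fun n h => hxE (mem_iUnion_of_mem n h)
    simp [hardyOp, hbx, ENNReal.zero_rpow_of_pos hq]

theorem discrete_hardy_iff_hardyOp_of_step {p q : ℝ} (hp : 1 ≤ p) (hq : 0 < q)
    {u w A c : ℤ → ℝ} (hu : ∀ n, 0 ≤ u n) (hw : ∀ k, 0 ≤ w k)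
    (hcu : ∀ n, c n = c (n - 1) + u n) (hc0 : ∀ n, 0 ≤ c n)
    (hAw : ∀ k, A k = A (k + 1) + w k) (hA0 : ∀ k, 0 ≤ A k)
    (hlim : ∀ t, 0 < t → ∃ k, A k ≤ t) {b : ℝ → ℝ≥0∞}
    (hb1 : ∀ n x, c (n - 1) ≤ x → x < c n → b x = ENNReal.ofReal (A n))
    (hb2 : ∀ x, 0 < x → (∀ n, ¬ (c (n - 1) ≤ x ∧ x < c n)) → b x = 0) (C : ℝ≥0∞) :
    ((∀ g : ℤ → ℝ≥0∞,
        (∑' n : ℤ, (∑' k : ℤ, if n ≤ k then g k * ENNReal.ofReal (w k) else 0) ^ q *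
            ENNReal.ofReal (u n)) ^ (1/q) ≤
          C * (∑' k : ℤ, g k ^ p * ENNReal.ofReal (w k)) ^ (1/p)) ↔
      (∀ f : ℝ → ℝ≥0∞, Measurable f →
        (∫⁻ x in Ioi (0:ℝ), hardyOp b f x ^ q) ^ (1/q) ≤
          C * (∫⁻ t in Ioi (0:ℝ), f t ^ p) ^ (1/p))) := by
  set μ := volume.restrict (Ioi (0 : ℝ))
  set D : ℤ → Set ℝ := fun k => Ico (A (k + 1)) (A k)
  have hA : Antitone A := antitone_int_of_succ_le fun k => by linarith [hAw k, hw k]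
  have hc : Monotone c := monotone_int_of_le_succ fun n => by
    linarith [add_sub_cancel_right n 1 ▸ hcu (n + 1), hu (n + 1)]
  have hD : ∀ k, MeasurableSet (D k) := fun _ => measurableSet_Ico
  have hdisj : Pairwise (Disjoint on D) := by
    simpa [Order.succ_eq_add_one] using hA.pairwise_disjoint_on_Ico_succ
  have hμD : ∀ k, μ (D k) = ENNReal.ofReal (w k) := fun k => by
    rw [volume_restrict_Ioi_Ico (hA0 _), hAw k, add_sub_cancel_left]
  have hcu' : ∀ n, c n - c (n - 1) = u n := fun n => by linarith [hcu n]
  have hfin : ∀ k, μ (D k) ≠ ∞ := fun k => by rw [hμD]; exact ENNReal.ofReal_ne_top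
  have hkey : ∀ f, ∫⁻ x, hardyOp b f x ^ q ∂μ =
      ∑' n, (∑' k, if n ≤ k then ∫⁻ t in D k, f t ∂μ else 0) ^ q * ENNReal.ofReal (u n) :=
    fun f => (lintegral_hardyOp_rpow_eq_tsum hq hA hlim hc hc0 hb1 hb2 f).trans
      (by simp only [hcu']; rfl)
  constructor
  · intro hdisc f hf
    have hgw : ∀ k, (∫⁻ t in D k, f t ∂μ) / ENNReal.ofReal (w k) * ENNReal.ofReal (w k) =
        ∫⁻ t in D k, f t ∂μ := fun k => by
      simpa only [hμD] using setLIntegral_div_measure_mul (hfin k) f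
    have hle := tsum_setLIntegral_div_rpow_mul_le hD hdisj hfin hp hf.aemeasurable
    simp only [hμD] at hle
    calc _ = _ := by rw [hkey]; simp only [hgw]
      _ ≤ _ := hdisc fun k => (∫⁻ t in D k, f t ∂μ) / ENNReal.ofReal (w k)
      _ ≤ _ := by gcongr
  · intro hcont g
    have h := hcont (fun t => ∑' k, (D k).indicator (fun _ => g k) t)
      (Measurable.tsum fun k => measurable_const.indicator (hD k))
    simp_rw [hkey, setLIntegral_tsum_indicator_const hD hdisj,
      lintegral_tsum_indicator_const_rpow hD hdisj (by linarith : (0 : ℝ) < p), hμD] at h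
    exact h

/-- The normal form parameter of the discrete (dual) Hardy
inequality is the step function taking value `W n` on `[U (n-1), U n)`. -/
theorem normal_form_parameter_discrete (p q : ℝ) (hp : 1 < p) (hq : 0 < q)
    (u w : ℤ → ℝ) (hu : ∀ k, 0 ≤ u k) (hw : ∀ k, 0 ≤ w k)
    (U W : ℤ → ℝ≥0∞)
    (hU : ∀ n : ℤ, U n = ∑' k : ℤ, if k ≤ n then ENNReal.ofReal (u k) else 0)
    (hW : ∀ n : ℤ, W n = ∑' k : ℤ, if n ≤ k then ENNReal.ofReal (w k) else 0)
    (hUfin : ∀ n, U n < ∞) (hWfin : ∀ n, W n < ∞)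
    (b : ℝ → ℝ≥0∞)
    (hb1 : ∀ n : ℤ, ∀ x : ℝ, (U (n-1)).toReal ≤ x → x < (U n).toReal → b x = W n)
    (hb2 : ∀ x : ℝ, 0 < x →
      (∀ n : ℤ, ¬ ((U (n-1)).toReal ≤ x ∧ x < (U n).toReal)) → b x = 0) :
    ∀ C : ℝ≥0∞,
      ((∀ g : ℤ → ℝ≥0∞,
          (∑' n : ℤ, (∑' k : ℤ, if n ≤ k then g k * ENNReal.ofReal (w k) else 0) ^ q *
              ENNReal.ofReal (u n)) ^ (1/q) ≤
            C * (∑' k : ℤ, g k ^ p * ENNReal.ofReal (w k)) ^ (1/p)) ↔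
        (∀ f : ℝ → ℝ≥0∞, Measurable f →
          (∫⁻ x in Ioi (0:ℝ), hardyOp b f x ^ q) ^ (1/q) ≤
            C * (∫⁻ t in Ioi (0:ℝ), f t ^ p) ^ (1/p))) := by
  refine discrete_hardy_iff_hardyOp_of_step hp.le hq hu hw (c := fun n => (U n).toReal)
    (A := fun k => (W k).toReal) (fun n => ?_) (fun _ => ENNReal.toReal_nonneg) (fun k => ?_)
    (fun _ => ENNReal.toReal_nonneg) (fun t ht => ?_) (fun n x h1 h2 => ?_) hb2
  · have hfin := hU (n - 1) ▸ (hUfin (n - 1)).ne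
    rw [hU n, hU (n - 1), tsum_ite_le_eq_add, ENNReal.toReal_add hfin ENNReal.ofReal_ne_top,
      ENNReal.toReal_ofReal (hu n)]
  · have hfin := hW (k + 1) ▸ (hWfin (k + 1)).ne
    rw [hW k, hW (k + 1), tsum_ite_ge_eq_add, ENNReal.toReal_add hfin ENNReal.ofReal_ne_top,
      ENNReal.toReal_ofReal (hw k)]
  · obtain ⟨k, hk⟩ := exists_tsum_ite_ge_lt (hW 0 ▸ (hWfin 0).ne) (ENNReal.ofReal_pos.mpr ht)
    exact ⟨k, ENNReal.toReal_le_of_le_ofReal ht.le (hW k ▸ hk.le)⟩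
  · rw [hb1 n x h1 h2, ENNReal.ofReal_toReal (hWfin n).ne]
end
end

section
/- Let b : (0,∞) → [0,∞] be non-increasing and let b⁻¹ be its generalized inverse. Then b⁻¹ is non-increasing; for all nonnegative Lebesgue-measurable f, g on (0,∞), ∫_0^∞ (H_b f)(x) g(x) dx = ∫_0^∞ f(t) (H_{b⁻¹} g)(t) dt; and for all p, q ∈ [1,∞], N_{q',p'}(b⁻¹) = N_{p,q}(b), where p' and q' are the conjugate exponents of p and q. -/
open MeasureTheory Set Filter Topology
open scoped ENNReal

noncomputable section

/-!
Since `b` is non-increasing, for `x, t > 0` the conditions `t < b x` and `x < b⁻¹ t` agree except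
on the graph `x = b⁻¹ t`, which is null in `x` for each fixed `t`; Tonelli's theorem then turns
`∫ (H_b f) g` into `∫ f (H_{b⁻¹} g)`. So `H_b` and `H_{b⁻¹}` are adjoint, and the norm identity says
that an operator `L^p → L^q` and its adjoint `L^{q'} → L^{p'}` have the same norm: one inequality is
Hölder's, the other is the converse Hölder inequality `‖h‖_r ≤ D` whenever `∫ h g ≤ D ‖g‖_{r'}`
for all `g`, proved by testing against `g = k ^ (r - 1)` for truncations `k` of `h` (and against
indicators of sets of finite measure when `r = ∞`).
-/

section LqNormGen

variable {α : Type*} [MeasurableSpace α] {μ : Measure α}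

lemma lqNormGen_top (g : α → ℝ≥0∞) : lqNormGen μ ∞ g = essSup g μ := if_pos rfl

lemma lqNormGen_of_ne_top {r : ℝ≥0∞} (hr : r ≠ ∞) (g : α → ℝ≥0∞) :
    lqNormGen μ r g = (∫⁻ x, g x ^ r.toReal ∂μ) ^ (1 / r.toReal) := if_neg hr

lemma lqNormGen_one (g : α → ℝ≥0∞) : lqNormGen μ 1 g = ∫⁻ x, g x ∂μ := by
  simp [lqNormGen_of_ne_top ENNReal.one_ne_top]

lemma lqNormGen_congr_ae {r : ℝ≥0∞} {g g' : α → ℝ≥0∞} (h : g =ᵐ[μ] g') :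
    lqNormGen μ r g = lqNormGen μ r g' := by
  rw [lqNormGen, lqNormGen, essSup_congr_ae h, lintegral_congr_ae (h.mono fun x hx => by rw [hx])]

lemma lintegral_mul_le_essSup_mul_lintegral {h g : α → ℝ≥0∞} (hg : AEMeasurable g μ) :
    ∫⁻ x, h x * g x ∂μ ≤ essSup h μ * ∫⁻ x, g x ∂μ :=
  calc ∫⁻ x, h x * g x ∂μ ≤ ∫⁻ x, essSup h μ * g x ∂μ :=
        lintegral_mono_ae ((ENNReal.ae_le_essSup h).mono fun _ hx => mul_le_mul_left hx _)
    _ = essSup h μ * ∫⁻ x, g x ∂μ := lintegral_const_mul'' _ hg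

theorem lintegral_mul_le_lqNormGen_mul_lqNormGen {r r' : ℝ≥0∞} [r.HolderConjugate r']
    {h g : α → ℝ≥0∞} (hh : AEMeasurable h μ) (hg : AEMeasurable g μ) :
    ∫⁻ x, h x * g x ∂μ ≤ lqNormGen μ r h * lqNormGen μ r' g := by
  rcases eq_or_ne r ∞ with rfl | hr
  · obtain rfl : r' = 1 := (ENNReal.HolderConjugate.eq_top_iff_eq_one ∞ r').1 rfl
    rw [lqNormGen_top, lqNormGen_one]
    exact lintegral_mul_le_essSup_mul_lintegral hg
  rcases eq_or_ne r' ∞ with rfl | hr'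
  · obtain rfl : r = 1 := (ENNReal.HolderConjugate.eq_top_iff_eq_one ∞ r).1 rfl
    rw [lqNormGen_top, lqNormGen_one, mul_comm]
    simp_rw [mul_comm (h _)]
    exact lintegral_mul_le_essSup_mul_lintegral hh
  rw [lqNormGen_of_ne_top hr, lqNormGen_of_ne_top hr']
  exact ENNReal.lintegral_mul_le_Lp_mul_Lq μ (ENNReal.HolderConjugate.toReal_of_ne_top hr hr') hh hg

lemma essSup_le_of_forall_setLIntegral_le [SigmaFinite μ] {h : α → ℝ≥0∞} (hh : Measurable h)
    {D : ℝ≥0∞} (H : ∀ s, MeasurableSet s → μ s ≠ ∞ → ∫⁻ x in s, h x ∂μ ≤ D * μ s) :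
    essSup h μ ≤ D := by
  by_contra! hD
  obtain ⟨c, hDc, hc⟩ := exists_between hD
  have hpos : 0 < μ {x | c < h x} := by
    refine pos_iff_ne_zero.2 fun h0 => hc.not_ge (essSup_le_of_ae_le c ?_)
    exact ae_iff.2 (by simpa only [not_le] using h0)
  obtain ⟨s, hs, hsub, hs_pos, hs_fin⟩ :=
    Measure.exists_subset_measure_lt_top (measurableSet_lt measurable_const hh) hpos
  have hcD : c * μ s ≤ D * μ s :=
    calc c * μ s = ∫⁻ _ in s, c ∂μ := (setLIntegral_const s c).symm
      _ ≤ ∫⁻ x in s, h x ∂μ := setLIntegral_mono hh fun x hx => (hsub hx).le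
      _ ≤ D * μ s := H s hs hs_fin.ne
  exact (ENNReal.mul_lt_mul_left hs_pos.ne' hs_fin.ne hDc).not_ge hcD

lemma lintegral_rpow_le_of_forall_lintegral_rpow_ne_top [SigmaFinite μ] {h : α → ℝ≥0∞}
    (hh : Measurable h) {a : ℝ} (ha : 0 < a) {M : ℝ≥0∞}
    (H : ∀ k : α → ℝ≥0∞, Measurable k → k ≤ h → ∫⁻ x, k x ^ a ∂μ ≠ ∞ →
      ∫⁻ x, k x ^ a ∂μ ≤ M) :
    ∫⁻ x, h x ^ a ∂μ ≤ M := by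
  set k : ℕ → α → ℝ≥0∞ := fun n => (spanningSets μ n).indicator fun x => h x ⊓ n
  have hk_meas (n : ℕ) : Measurable (k n) :=
    (hh.inf measurable_const).indicator (measurableSet_spanningSets μ n)
  have hk_le (n : ℕ) : k n ≤ h := indicator_le fun _ _ => inf_le_left
  have hk_mono : Monotone k := fun m n hmn x =>
    (indicator_le_indicator_of_subset (monotone_spanningSets μ hmn) (fun _ => zero_le) x).trans
      (indicator_le_indicator (inf_le_inf_left _ (by exact_mod_cast hmn)))
  have hk_sup (x : α) : ⨆ n, k n x = h x := by
    refine le_antisymm (iSup_le fun n => hk_le n x) ?_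
    have hN := mem_spanningSetsIndex μ x
    calc h x = ⨆ n : ℕ, h x ⊓ n := by rw [← inf_iSup_eq, ENNReal.iSup_natCast, inf_top_eq]
      _ ≤ ⨆ n, k n x := iSup_mono' fun n => ⟨max n (spanningSetsIndex μ x), by
          simp only [k]
          rw [indicator_of_mem (monotone_spanningSets μ (le_max_right _ _) hN)]
          exact inf_le_inf_left _ (by exact_mod_cast le_max_left _ _)⟩
  have hk_fin (n : ℕ) : ∫⁻ x, k n x ^ a ∂μ ≠ ∞ := by
    refine ne_top_of_le_ne_top ?_ (lintegral_mono (g := (spanningSets μ n).indicator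
      fun _ => (n : ℝ≥0∞) ^ a) fun x => ?_)
    · rw [lintegral_indicator_const (measurableSet_spanningSets μ n)]
      exact ENNReal.mul_ne_top (ENNReal.rpow_ne_top_of_nonneg ha.le (ENNReal.natCast_ne_top n))
        (measure_spanningSets_lt_top μ n).ne
    by_cases hx : x ∈ spanningSets μ n
    · simp only [k, indicator_of_mem hx]
      exact ENNReal.rpow_le_rpow inf_le_right ha.le
    · simp [k, indicator_of_notMem hx, ENNReal.zero_rpow_of_pos ha]
  calc ∫⁻ x, h x ^ a ∂μ = ∫⁻ x, ⨆ n, k n x ^ a ∂μ := by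
        refine lintegral_congr fun x => ?_
        simpa only [ENNReal.orderIsoRpow_apply, hk_sup] using
          (ENNReal.orderIsoRpow a ha).map_iSup fun n => k n x
    _ = ⨆ n, ∫⁻ x, k n x ^ a ∂μ :=
        lintegral_iSup (fun n => (hk_meas n).pow_const a)
          fun m n hmn x => ENNReal.rpow_le_rpow (hk_mono hmn x) ha.le
    _ ≤ M := iSup_le fun n => H _ (hk_meas n) (hk_le n) (hk_fin n)

lemma rpow_one_div_le_of_le_mul_rpow {a a' : ℝ} (haa' : a.HolderConjugate a') {I D : ℝ≥0∞}
    (hI : I ≠ ∞) (h : I ≤ D * I ^ (1 / a')) : I ^ (1 / a) ≤ D := by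
  rcases eq_or_ne I 0 with rfl | hI0
  · rw [ENNReal.zero_rpow_of_pos (one_div_pos.2 haa'.pos)]
    exact zero_le
  have hsplit : I ^ (1 / a) * I ^ (1 / a') = I := by
    rw [← ENNReal.rpow_add _ _ hI0 hI, one_div, one_div, haa'.inv_add_inv_eq_one,
      ENNReal.rpow_one]
  refine (ENNReal.mul_le_mul_iff_left ?_ ?_).1 (hsplit.trans_le h)
  · exact (ENNReal.rpow_pos (pos_iff_ne_zero.2 hI0) hI).ne'
  · exact ENNReal.rpow_ne_top_of_nonneg (one_div_nonneg.2 haa'.symm.nonneg) hI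

lemma lqNormGen_le_of_forall_lintegral_mul_le_of_ne_top [SigmaFinite μ] {r r' : ℝ≥0∞}
    [r.HolderConjugate r'] (hr : r ≠ ∞) (hr' : r' ≠ ∞) {h : α → ℝ≥0∞} (hh : Measurable h)
    {D : ℝ≥0∞} (H : ∀ g, Measurable g → ∫⁻ x, h x * g x ∂μ ≤ D * lqNormGen μ r' g) :
    lqNormGen μ r h ≤ D := by
  have hconj := ENNReal.HolderConjugate.toReal_of_ne_top hr hr'
  set a := r.toReal
  rw [lqNormGen_of_ne_top hr, one_div, ENNReal.rpow_inv_le_iff hconj.pos]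
  refine lintegral_rpow_le_of_forall_lintegral_rpow_ne_top hh hconj.pos fun k hk hkh hfin => ?_
  rw [← ENNReal.rpow_inv_le_iff hconj.pos, ← one_div]
  refine rpow_one_div_le_of_le_mul_rpow hconj hfin ?_
  -- test against `g = k ^ (a - 1)`, whose `L^{r'}` norm is `(∫ k ^ a) ^ (1 / r')`
  calc ∫⁻ x, k x ^ a ∂μ = ∫⁻ x, k x * k x ^ (a - 1) ∂μ := by
        refine lintegral_congr fun x => ?_
        simpa using
          ENNReal.rpow_add_of_nonneg (x := k x) 1 (a - 1) zero_le_one hconj.sub_one_pos.le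
    _ ≤ ∫⁻ x, h x * k x ^ (a - 1) ∂μ := lintegral_mono fun x => by gcongr; exact hkh x
    _ ≤ D * lqNormGen μ r' (fun x => k x ^ (a - 1)) := H _ (hk.pow_const _)
    _ = D * (∫⁻ x, k x ^ a ∂μ) ^ (1 / r'.toReal) := by
        simp_rw [lqNormGen_of_ne_top hr', ← ENNReal.rpow_mul, hconj.sub_one_mul_conj]

theorem lqNormGen_le_of_forall_lintegral_mul_le [SigmaFinite μ] {r r' : ℝ≥0∞}
    [r.HolderConjugate r'] {h : α → ℝ≥0∞} (hh : AEMeasurable h μ) {D : ℝ≥0∞}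
    (H : ∀ g, Measurable g → ∫⁻ x, h x * g x ∂μ ≤ D * lqNormGen μ r' g) :
    lqNormGen μ r h ≤ D := by
  wlog hh_meas : Measurable h generalizing h
  · rw [lqNormGen_congr_ae hh.ae_eq_mk]
    refine this hh.measurable_mk.aemeasurable (fun g hg => ?_) hh.measurable_mk
    refine (lintegral_congr_ae ?_).trans_le (H g hg)
    exact hh.ae_eq_mk.symm.mono fun x hx => by simp only [hx]
  rcases eq_or_ne r ∞ with rfl | hr
  · obtain rfl : r' = 1 := (ENNReal.HolderConjugate.eq_top_iff_eq_one ∞ r').1 rfl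
    rw [lqNormGen_top]
    refine essSup_le_of_forall_setLIntegral_le hh_meas fun s hs _ => ?_
    have hind : ∫⁻ x, h x * s.indicator 1 x ∂μ = ∫⁻ x in s, h x ∂μ := by
      rw [← lintegral_indicator hs]
      congr 1 with x
      by_cases hx : x ∈ s <;> simp [hx]
    simpa [hind, lqNormGen_one, lintegral_indicator_one hs] using
      H (s.indicator 1) (measurable_one.indicator hs)
  rcases eq_or_ne r' ∞ with rfl | hr'
  · obtain rfl : r = 1 := (ENNReal.HolderConjugate.eq_top_iff_eq_one ∞ r).1 rfl
    have hone : lqNormGen μ ∞ (fun _ => 1) ≤ 1 := by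
      rw [lqNormGen_top]
      exact essSup_le_of_ae_le 1 (ae_of_all _ fun _ => le_rfl)
    calc lqNormGen μ 1 h = ∫⁻ x, h x * 1 ∂μ := by simp [lqNormGen_one]
      _ ≤ D * lqNormGen μ ∞ (fun _ => 1) := H _ measurable_const
      _ ≤ D := mul_le_of_le_one_right' hone
  exact lqNormGen_le_of_forall_lintegral_mul_le_of_ne_top hr hr' hh_meas H

theorem lqNormGen_le_of_adjoint_le [SigmaFinite μ] {p p' q q' : ℝ≥0∞} [p.HolderConjugate p']
    [q.HolderConjugate q'] {T S : (α → ℝ≥0∞) → α → ℝ≥0∞} {C : ℝ≥0∞}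
    (hT : ∀ f, Measurable f → AEMeasurable (T f) μ)
    (hS : ∀ g, Measurable g → AEMeasurable (S g) μ)
    (hTS : ∀ f g, Measurable f → Measurable g →
      ∫⁻ x, T f x * g x ∂μ = ∫⁻ x, S g x * f x ∂μ)
    (hSC : ∀ g, Measurable g → lqNormGen μ p' (S g) ≤ C * lqNormGen μ q' g)
    {f : α → ℝ≥0∞} (hf : Measurable f) :
    lqNormGen μ q (T f) ≤ C * lqNormGen μ p f := by
  refine lqNormGen_le_of_forall_lintegral_mul_le (r' := q') (hT f hf) fun g hg => ?_
  calc ∫⁻ x, T f x * g x ∂μ = ∫⁻ x, S g x * f x ∂μ := hTS f g hf hg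
    _ ≤ lqNormGen μ p' (S g) * lqNormGen μ p f :=
        lintegral_mul_le_lqNormGen_mul_lqNormGen (hS g hg) hf.aemeasurable
    _ ≤ C * lqNormGen μ q' g * lqNormGen μ p f := mul_le_mul_left (hSC g hg) _
    _ = C * lqNormGen μ p f * lqNormGen μ q' g := mul_right_comm _ _ _

end LqNormGen

lemma hardyOp_eq_setLIntegral_indicator (c f : ℝ → ℝ≥0∞) (x : ℝ) :
    hardyOp c f x = ∫⁻ t in Ioi 0, {t | ENNReal.ofReal t < c x}.indicator f t := by
  have hs : MeasurableSet {t : ℝ | ENNReal.ofReal t < c x} :=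
    measurableSet_lt ENNReal.measurable_ofReal measurable_const
  rw [lintegral_indicator hs, Measure.restrict_restrict hs, hardyOp]
  congr 2 with t
  exact and_comm

lemma hardyOp_antitoneOn {c : ℝ → ℝ≥0∞} (hc : AntitoneOn c (Ioi 0)) (f : ℝ → ℝ≥0∞) :
    AntitoneOn (hardyOp c f) (Ioi 0) := fun _ hx _ hy hxy =>
  lintegral_mono_set fun _ ht => ⟨ht.1, ht.2.trans_le (hc hx hy hxy)⟩

lemma aemeasurable_hardyOp {c : ℝ → ℝ≥0∞} (hc : AntitoneOn c (Ioi 0)) (f : ℝ → ℝ≥0∞) :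
    AEMeasurable (hardyOp c f) (volume.restrict (Ioi 0)) :=
  aemeasurable_restrict_of_antitoneOn measurableSet_Ioi (hardyOp_antitoneOn hc f)

lemma genInv_antitone (b : ℝ → ℝ≥0∞) : Antitone (genInv b) := fun _ _ hyz =>
  iSup₂_mono' fun x hx => ⟨x, ⟨hx.1, (ENNReal.ofReal_le_ofReal hyz).trans_lt hx.2⟩, le_rfl⟩

lemma ofReal_le_genInv {b : ℝ → ℝ≥0∞} {x t : ℝ} (hx : 0 < x) (h : ENNReal.ofReal t < b x) :
    ENNReal.ofReal x ≤ genInv b t :=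
  le_iSup₂ (f := fun x (_ : 0 < x ∧ ENNReal.ofReal t < b x) => ENNReal.ofReal x) x ⟨hx, h⟩

lemma ofReal_lt_of_lt_genInv {b : ℝ → ℝ≥0∞} (hb : AntitoneOn b (Ioi 0)) {x t : ℝ}
    (hx : 0 < x) (h : ENNReal.ofReal x < genInv b t) : ENNReal.ofReal t < b x := by
  obtain ⟨y, ⟨hy, hty⟩, hxy⟩ := by simpa only [genInv, lt_iSup_iff] using h
  exact hty.trans_le (hb hx hy ((ENNReal.ofReal_lt_ofReal_iff hy).1 hxy).le)

lemma setOf_lt_ae_eq_setOf_lt_genInv {b : ℝ → ℝ≥0∞} (hb : AntitoneOn b (Ioi 0)) (t : ℝ) :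
    {x | ENNReal.ofReal t < b x} =ᵐ[volume.restrict (Ioi 0)]
      {x | ENNReal.ofReal x < genInv b t} := by
  refine eventuallyEq_set.2 ?_
  filter_upwards [ae_restrict_mem measurableSet_Ioi,
    Measure.ae_ne (volume.restrict (Ioi 0)) (genInv b t).toReal] with x hx hne
  refine ⟨fun h => (ofReal_le_genInv hx h).lt_of_ne fun heq => hne ?_,
    ofReal_lt_of_lt_genInv hb hx⟩
  rw [← heq, ENNReal.toReal_ofReal hx.le]

lemma measurableSet_strictSubgraph_of_antitoneOn {b : ℝ → ℝ≥0∞} (hb : AntitoneOn b (Ioi 0)) :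
    MeasurableSet {z : ℝ × ℝ | 0 < z.1 ∧ ENNReal.ofReal z.2 < b z.1} := by
  -- extending `b` by `∞` on `(-∞, 0]` gives a globally antitone, hence measurable, function
  set b' := (Ioi (0 : ℝ)).piecewise b fun _ => ∞
  have hb' : Measurable b' := Antitone.measurable fun x y hxy => by
    by_cases hx : 0 < x
    · have hy : 0 < y := hx.trans_le hxy
      simpa [b', hx, hy] using hb hx hy hxy
    · simp [b', hx]
  have hregion : {z : ℝ × ℝ | 0 < z.1 ∧ ENNReal.ofReal z.2 < b z.1} =
      Ioi 0 ×ˢ univ ∩ {z | ENNReal.ofReal z.2 < b' z.1} := by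
    ext z
    by_cases hz : 0 < z.1 <;> simp [b', hz]
  rw [hregion]
  exact (measurableSet_Ioi.prod MeasurableSet.univ).inter
    (measurableSet_lt (ENNReal.measurable_ofReal.comp measurable_snd) (hb'.comp measurable_fst))

theorem lintegral_hardyOp_mul {b : ℝ → ℝ≥0∞} (hb : AntitoneOn b (Ioi 0)) {f g : ℝ → ℝ≥0∞}
    (hf : Measurable f) (hg : Measurable g) :
    ∫⁻ x in Ioi 0, hardyOp b f x * g x = ∫⁻ t in Ioi 0, f t * hardyOp (genInv b) g t := by
  set E := {z : ℝ × ℝ | 0 < z.1 ∧ ENNReal.ofReal z.2 < b z.1}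
  set F : ℝ → ℝ → ℝ≥0∞ := fun x t => E.indicator (fun z => f z.2 * g z.1) (x, t)
  have hF : Measurable (Function.uncurry F) :=
    ((hf.comp measurable_snd).mul (hg.comp measurable_fst)).indicator
      (measurableSet_strictSubgraph_of_antitoneOn hb)
  have h_inner_t : ∀ x ∈ Ioi (0 : ℝ), hardyOp b f x * g x = ∫⁻ t in Ioi 0, F x t := by
    intro x hx
    rw [hardyOp_eq_setLIntegral_indicator, ← lintegral_mul_const _ ((hf.indicator
      (measurableSet_lt ENNReal.measurable_ofReal measurable_const)))]
    congr 1 with t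
    by_cases ht : ENNReal.ofReal t < b x <;> simp [F, E, indicator, mem_Ioi.1 hx, ht]
  have h_inner_x (t : ℝ) : ∫⁻ x in Ioi 0, F x t = f t * hardyOp (genInv b) g t := by
    rw [hardyOp_eq_setLIntegral_indicator, ← lintegral_const_mul _ (hg.indicator
      (measurableSet_lt ENNReal.measurable_ofReal measurable_const))]
    refine lintegral_congr_ae ?_
    filter_upwards [ae_restrict_mem measurableSet_Ioi,
      indicator_ae_eq_of_ae_eq_set (f := g) (setOf_lt_ae_eq_setOf_lt_genInv hb t)] with x hx hgx
    rw [← hgx]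
    by_cases ht : ENNReal.ofReal t < b x <;> simp [F, E, indicator, mem_Ioi.1 hx, ht]
  calc ∫⁻ x in Ioi 0, hardyOp b f x * g x = ∫⁻ x in Ioi 0, ∫⁻ t in Ioi 0, F x t :=
        setLIntegral_congr_fun measurableSet_Ioi h_inner_t
    _ = ∫⁻ t in Ioi 0, ∫⁻ x in Ioi 0, F x t := lintegral_lintegral_swap hF.aemeasurable
    _ = ∫⁻ t in Ioi 0, f t * hardyOp (genInv b) g t := lintegral_congr h_inner_x

/-- Duality for normal form Hardy operators: `b⁻¹` is
non-increasing, `∫ (H_b f) g = ∫ f (H_{b⁻¹} g)`, and `N_{q',p'}(b⁻¹) = N_{p,q}(b)`. -/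
theorem duality_normal_form (b : ℝ → ℝ≥0∞) (hb : AntitoneOn b (Ioi 0)) :
    AntitoneOn (genInv b) (Ioi 0) ∧
    (∀ f g : ℝ → ℝ≥0∞, Measurable f → Measurable g →
      ∫⁻ x in Ioi (0:ℝ), hardyOp b f x * g x =
        ∫⁻ t in Ioi (0:ℝ), f t * hardyOp (genInv b) g t) ∧
    (∀ p q p' q' : ℝ≥0∞, 1 ≤ p → 1 ≤ q → 1/p + 1/p' = 1 → 1/q + 1/q' = 1 →
      Npq q' p' (genInv b) = Npq p q b) := by
  have hbinv : AntitoneOn (genInv b) (Ioi 0) := (genInv_antitone b).antitoneOn _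
  refine ⟨hbinv, fun f g hf hg => lintegral_hardyOp_mul hb hf hg, ?_⟩
  intro p q p' q' _ _ hpp' hqq'
  have : p.HolderConjugate p' := ENNReal.holderConjugate_iff.2 (by simpa only [one_div] using hpp')
  have : q.HolderConjugate q' := ENNReal.holderConjugate_iff.2 (by simpa only [one_div] using hqq')
  have hadj (f g : ℝ → ℝ≥0∞) (hf : Measurable f) (hg : Measurable g) :
      ∫⁻ x in Ioi 0, hardyOp b f x * g x = ∫⁻ x in Ioi 0, hardyOp (genInv b) g x * f x := by
    simp_rw [lintegral_hardyOp_mul hb hf hg, mul_comm (f _)]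
  unfold Npq
  congr 1 with C
  exact ⟨fun hC f hf => lqNormGen_le_of_adjoint_le (fun f _ => aemeasurable_hardyOp hb f)
      (fun g _ => aemeasurable_hardyOp hbinv g) hadj hC hf,
    fun hC g hg => lqNormGen_le_of_adjoint_le (fun g _ => aemeasurable_hardyOp hbinv g)
      (fun f _ => aemeasurable_hardyOp hb f) (fun g f hg hf => (hadj f g hf hg).symm) hC hg⟩
end
end

section
/- Let p, q ∈ (0,∞] and let a, b : (0,∞) → [0,∞) be non-increasing and finite-valued. Let |a−b|* denote the non-increasing rearrangement of |a−b| with respect to Lebesgue measure on (0,∞), i.e. |a−b|*(x) = sup{t > 0 : m{y > 0 : |a(y)−b(y)| > t} > x} (sup ∅ = 0, m Lebesgue measure). Then for every nonnegative Lebesgue-measurable f on (0,∞), ‖H_a f − H_b f‖_{L^q(0,∞)} ≤ N_{p,q}(|a−b|*) · ‖f‖_{L^p(0,∞)}. -/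
open MeasureTheory Set Filter Topology
open scoped ENNReal

noncomputable section

/-!
Let `f*` be the decreasing rearrangement of `f` and `F(m) = ∫_0^m f*`. The Hardy–Littlewood
inequality `∫_E f ≤ F(|E|)`, applied to `E = (0, u) \ (0, v)`, gives `|H_a f - H_b f| ≤ F ∘ |a - b|`
pointwise. Since `F` is nondecreasing and left-continuous, its superlevel sets are intervals
`(s, ∞]`, so `F ∘ |a - b|` and `F ∘ |a - b|* = H_{|a-b|*} f*` are equimeasurable and have the same
`L^q` norm. Finally `‖H_{|a-b|*} f*‖_q ≤ N_{p,q}(|a-b|*) ‖f*‖_p` and `‖f*‖_p = ‖f‖_p`.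
-/

namespace NormalFormHardy

def Ioo0 (m : ℝ≥0∞) : Set ℝ := {t : ℝ | 0 < t ∧ ENNReal.ofReal t < m}

lemma measurableSet_Ioo0 (m : ℝ≥0∞) : MeasurableSet (Ioo0 m) :=
  measurableSet_Ioi.inter (measurableSet_lt ENNReal.measurable_ofReal measurable_const)

lemma Ioo0_subset_Ioi (m : ℝ≥0∞) : Ioo0 m ⊆ Ioi 0 := fun _ ht => ht.1

lemma Ioo0_top : Ioo0 ∞ = Ioi 0 := by
  ext t
  simp [Ioo0]

lemma Ioo0_zero : Ioo0 0 = ∅ := by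
  ext t
  simp [Ioo0]

lemma Ioo0_ofReal (u : ℝ) : Ioo0 (ENNReal.ofReal u) = Ioo 0 u := by
  ext t
  simp only [Ioo0, mem_ofPred_eq, mem_Ioo, and_congr_right_iff]
  exact fun ht => ENNReal.ofReal_lt_ofReal_iff_of_nonneg ht.le

lemma Ioo0_inter_Ioo0 (m m' : ℝ≥0∞) : Ioo0 m ∩ Ioo0 m' = Ioo0 (min m m') := by
  ext t
  simp only [Ioo0, mem_inter_iff, mem_ofPred_eq, lt_min_iff]
  tauto

lemma volume_Ioo0 (m : ℝ≥0∞) : volume (Ioo0 m) = m := by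
  rcases eq_or_ne m ∞ with rfl | hm
  · simp [Ioo0_top]
  · rw [← ENNReal.ofReal_toReal hm, Ioo0_ofReal, Real.volume_Ioo, sub_zero]

variable {α : Type*} [MeasurableSpace α] {ν : Measure α}

lemma lintegral_eq_lintegral_measure_ofReal_lt [SFinite ν] {g : α → ℝ≥0∞} (hg : Measurable g) :
    ∫⁻ x, g x ∂ν = ∫⁻ t in Ioi 0, ν {x | ENNReal.ofReal t < g x} := by
  set S : Set (α × ℝ) := {z | z.2 ∈ Ioo0 (g z.1)}
  have hS : MeasurableSet S :=
    (measurableSet_lt measurable_const measurable_snd).inter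
      (measurableSet_lt (ENNReal.measurable_ofReal.comp measurable_snd) (hg.comp measurable_fst))
  have hsection : ∀ t, ν ((fun x => (x, t)) ⁻¹' S)
      = (Ioi 0).indicator (fun t => ν {x | ENNReal.ofReal t < g x}) t := by
    intro t
    by_cases ht : 0 < t <;> simp [S, Ioo0, ht]
  calc ∫⁻ x, g x ∂ν = ∫⁻ x, volume (Prod.mk x ⁻¹' S) ∂ν :=
        lintegral_congr fun x => (volume_Ioo0 (g x)).symm
    _ = ∫⁻ t, ν ((fun x => (x, t)) ⁻¹' S) := by
      rw [← Measure.prod_apply hS, Measure.prod_apply_symm hS]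
    _ = ∫⁻ t in Ioi 0, ν {x | ENNReal.ofReal t < g x} := by
      simp_rw [hsection, lintegral_indicator measurableSet_Ioi]

lemma lintegral_le_lintegral_measure_ofReal_lt [SFinite ν] (g : α → ℝ≥0∞) :
    ∫⁻ x, g x ∂ν ≤ ∫⁻ t in Ioi 0, ν {x | ENNReal.ofReal t < g x} := by
  obtain ⟨g', hg', hg'g, hint⟩ := exists_measurable_le_lintegral_eq ν g
  rw [hint, lintegral_eq_lintegral_measure_ofReal_lt hg']
  exact lintegral_mono fun t => measure_mono fun x hx => hx.trans_le (hg'g x)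

lemma lintegral_le_lintegral_of_measure_lt_le {β : Type*} [MeasurableSpace β] {ν' : Measure β}
    [SFinite ν] [SFinite ν'] {g : α → ℝ≥0∞} {h : β → ℝ≥0∞} (hh : Measurable h)
    (hgh : ∀ c, ν {x | c < g x} ≤ ν' {y | c < h y}) : ∫⁻ x, g x ∂ν ≤ ∫⁻ y, h y ∂ν' :=
  (lintegral_le_lintegral_measure_ofReal_lt (ν := ν) g).trans <|
    (lintegral_mono fun _ => hgh _).trans_eq (lintegral_eq_lintegral_measure_ofReal_lt hh).symm

lemma eLpNorm_le_eLpNorm_of_measure_lt_le {β : Type*} [MeasurableSpace β] {ν' : Measure β}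
    [SFinite ν] [SFinite ν'] {g : α → ℝ≥0∞} {h : β → ℝ≥0∞} (hh : Measurable h)
    (hgh : ∀ c, ν {x | c < g x} ≤ ν' {y | c < h y}) (p : ℝ≥0∞) :
    eLpNorm g p ν ≤ eLpNorm h p ν' := by
  rcases eq_or_ne p 0 with rfl | hp0
  · simp
  rcases eq_or_ne p ∞ with rfl | hptop
  · simp only [eLpNorm_exponent_top, eLpNormEssSup, enorm_eq_self, essSup_eq_sInf]
    exact sInf_le_sInf fun c hc => le_zero_iff.mp (hc ▸ hgh c)
  have hr : 0 < p.toReal := ENNReal.toReal_pos hp0 hptop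
  simp only [eLpNorm_eq_lintegral_rpow_enorm_toReal hp0 hptop, enorm_eq_self]
  refine ENNReal.rpow_le_rpow ?_ (by positivity)
  refine lintegral_le_lintegral_of_measure_lt_le (ν := ν) (hh.pow_const _) fun c => ?_
  simp_rw [← ENNReal.rpow_inv_lt_iff hr]
  exact hgh _

lemma lqNormGen_eq_eLpNorm {q : ℝ≥0∞} (hq : q ≠ 0) (g : α → ℝ≥0∞) :
    lqNormGen ν q g = eLpNorm g q ν := by
  rcases eq_or_ne q ∞ with rfl | hqtop
  · simp [lqNormGen, eLpNormEssSup]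
  · simp [lqNormGen, eLpNorm_eq_lintegral_rpow_enorm_toReal hq hqtop, hqtop]

lemma lqNorm_eq_eLpNorm {q : ℝ≥0∞} (hq : q ≠ 0) (g : ℝ → ℝ≥0∞) :
    lqNorm q g = eLpNorm g q (volume.restrict (Ioi 0)) :=
  lqNormGen_eq_eLpNorm hq g

lemma exists_lt_lt_measure_setOf_lt {β : Type*} [LinearOrder β] [TopologicalSpace β]
    [OrderTopology β] [DenselyOrdered β] [FirstCountableTopology β] (g : α → β) {t : β}
    {c : ℝ≥0∞} (h : c < ν {y | t < g y}) : ∃ t', t < t' ∧ c < ν {y | t' < g y} := by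
  obtain ⟨t₁, ht₁⟩ : ∃ t₁, t < t₁ := by
    by_contra! hmax
    have hempty : {y | t < g y} = ∅ := eq_empty_of_forall_notMem fun y => (hmax (g y)).not_gt
    simp [hempty] at h
  obtain ⟨u, hu_anti, hu_mem, hu_lim⟩ := exists_seq_strictAnti_tendsto' ht₁
  have hU : {y | t < g y} = ⋃ n, {y | u n < g y} := by
    ext y
    simp only [mem_ofPred_eq, mem_iUnion]
    exact ⟨fun hy => (hu_lim.eventually (gt_mem_nhds hy)).exists,
      fun ⟨n, hn⟩ => (hu_mem n).1.trans hn⟩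
  have hmono : Monotone fun n => {y | u n < g y} := fun m n hmn y hy =>
    (hu_anti.antitone hmn).trans_lt hy
  rw [hU, hmono.measure_iUnion] at h
  obtain ⟨n, hn⟩ := lt_iSup_iff.mp h
  exact ⟨u n, (hu_mem n).1, hn⟩

def decreasingRearrangement (ν : Measure α) (g : α → ℝ≥0∞) (x : ℝ) : ℝ≥0∞ :=
  ⨆ (t : ℝ≥0∞) (_ : ENNReal.ofReal x < ν {y | t < g y}), t

lemma lt_decreasingRearrangement_iff {g : α → ℝ≥0∞} {x : ℝ} {c : ℝ≥0∞} :
    c < decreasingRearrangement ν g x ↔ ENNReal.ofReal x < ν {y | c < g y} := by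
  constructor
  · intro h
    obtain ⟨t, ht⟩ := lt_iSup_iff.mp h
    obtain ⟨hx, hct⟩ := lt_iSup_iff.mp ht
    exact hx.trans_le (measure_mono fun y hy => hct.trans hy)
  · intro h
    obtain ⟨t, hct, hx⟩ := exists_lt_lt_measure_setOf_lt g h
    exact hct.trans_le (le_iSup₂ (f := fun t (_ : ENNReal.ofReal x < ν {y | t < g y}) => t) t hx)

lemma antitone_decreasingRearrangement (g : α → ℝ≥0∞) :
    Antitone (decreasingRearrangement ν g) := fun _ _ hxx' =>
  le_of_forall_lt fun _ hc => lt_decreasingRearrangement_iff.mpr <|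
    (ENNReal.ofReal_le_ofReal hxx').trans_lt (lt_decreasingRearrangement_iff.mp hc)

lemma measurable_decreasingRearrangement (g : α → ℝ≥0∞) :
    Measurable (decreasingRearrangement ν g) :=
  (antitone_decreasingRearrangement g).measurable

lemma iSup_ofReal_eq_decreasingRearrangement (d : α → ℝ) (x : ℝ) :
    ⨆ (t : ℝ) (_ : 0 < t ∧ ENNReal.ofReal x < ν {y | t < d y}), ENNReal.ofReal t
      = decreasingRearrangement ν (fun y => ENNReal.ofReal (d y)) x := by
  refine le_antisymm (iSup₂_le fun t ⟨ht, hx⟩ => ?_) (iSup₂_le fun s hs => ?_)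
  · refine le_iSup₂_of_le (ENNReal.ofReal t) (hx.trans_le (measure_mono fun y hy => ?_)) le_rfl
    exact (ENNReal.ofReal_lt_ofReal_iff_of_nonneg ht.le).mpr hy
  · rcases eq_or_ne s 0 with rfl | hs0
    · exact zero_le
    have hstop : s ≠ ∞ := by
      rintro rfl
      simp at hs
    refine le_iSup₂_of_le s.toReal ⟨ENNReal.toReal_pos hs0 hstop,
      hs.trans_le (measure_mono fun y hy => ENNReal.toReal_lt_of_lt_ofReal hy)⟩
      (ENNReal.ofReal_toReal hstop).ge

lemma setOf_lt_decreasingRearrangement_inter_Ioo0 (g : α → ℝ≥0∞) (c m : ℝ≥0∞) :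
    {x | c < decreasingRearrangement ν g x} ∩ Ioo0 m = Ioo0 (min (ν {y | c < g y}) m) := by
  rw [← Ioo0_inter_Ioo0]
  ext x
  simp only [Ioo0, mem_inter_iff, mem_ofPred_eq, lt_decreasingRearrangement_iff]
  tauto

lemma volume_restrict_Ioo0_setOf_lt_decreasingRearrangement (g : α → ℝ≥0∞) (c m : ℝ≥0∞) :
    volume.restrict (Ioo0 m) {x | c < decreasingRearrangement ν g x}
      = min (ν {y | c < g y}) m := by
  rw [Measure.restrict_apply' (measurableSet_Ioo0 m),
    setOf_lt_decreasingRearrangement_inter_Ioo0, volume_Ioo0]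

lemma measure_lt_decreasingRearrangement (g : α → ℝ≥0∞) (c : ℝ≥0∞) :
    volume.restrict (Ioi 0) {x | c < decreasingRearrangement ν g x} = ν {y | c < g y} := by
  rw [← Ioo0_top, volume_restrict_Ioo0_setOf_lt_decreasingRearrangement, min_top_right]

lemma eLpNorm_decreasingRearrangement [SFinite ν] {g : α → ℝ≥0∞} (hg : Measurable g)
    (p : ℝ≥0∞) :
    eLpNorm (decreasingRearrangement ν g) p (volume.restrict (Ioi 0)) = eLpNorm g p ν :=
  le_antisymm
    (eLpNorm_le_eLpNorm_of_measure_lt_le hg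
      (fun c => (measure_lt_decreasingRearrangement (ν := ν) g c).le) p)
    (eLpNorm_le_eLpNorm_of_measure_lt_le (measurable_decreasingRearrangement g)
      (fun c => (measure_lt_decreasingRearrangement g c).ge) p)

def primitive (h : ℝ → ℝ≥0∞) (m : ℝ≥0∞) : ℝ≥0∞ :=
  ∫⁻ t in Ioo0 m, h t

lemma hardyOp_eq_primitive (b f : ℝ → ℝ≥0∞) (x : ℝ) : hardyOp b f x = primitive f (b x) := rfl

lemma primitive_mono (h : ℝ → ℝ≥0∞) : Monotone (primitive h) := fun _ _ hmm' =>
  lintegral_mono_set fun _ ht => ⟨ht.1, ht.2.trans_le hmm'⟩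

lemma exists_lt_lt_primitive (h : ℝ → ℝ≥0∞) {c m : ℝ≥0∞} (hc : c < primitive h m) :
    ∃ m' < m, c < primitive h m' := by
  -- Left-continuity in `m` is continuity from above of superlevel sets in the order dual.
  have hIoo0 : ∀ m, primitive h m
      = (volume.withDensity h).restrict (Ioi 0) {t | OrderDual.toDual m < ENNReal.ofReal t} := by
    intro m
    rw [primitive, ← withDensity_apply _ (measurableSet_Ioo0 m),
      Measure.restrict_apply' measurableSet_Ioi, Ioo0, ofPred_and, inter_comm]
    rfl
  rw [hIoo0] at hc
  obtain ⟨m', hm', hcm'⟩ := exists_lt_lt_measure_setOf_lt _ hc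
  exact ⟨OrderDual.ofDual m', hm', by rwa [hIoo0]⟩

lemma exists_forall_lt_primitive_iff (h : ℝ → ℝ≥0∞) (c : ℝ≥0∞) :
    ∃ s₀, ∀ s, c < primitive h s ↔ s₀ < s := by
  refine ⟨sInf {s | c < primitive h s}, fun s => ⟨fun hs => ?_, fun hs => ?_⟩⟩
  · obtain ⟨s', hs', hcs'⟩ := exists_lt_lt_primitive h hs
    exact (sInf_le (show s' ∈ {s | c < primitive h s} from hcs')).trans_lt hs'
  · obtain ⟨s', hcs', hs'⟩ := sInf_lt_iff.mp hs
    exact hcs'.trans_le (primitive_mono h hs'.le)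

lemma measure_lt_primitive_comp_decreasingRearrangement (h : ℝ → ℝ≥0∞) (g : α → ℝ≥0∞)
    (c : ℝ≥0∞) :
    volume.restrict (Ioi 0) {x | c < primitive h (decreasingRearrangement ν g x)}
      = ν {y | c < primitive h (g y)} := by
  obtain ⟨s₀, hs₀⟩ := exists_forall_lt_primitive_iff h c
  simp_rw [hs₀]
  exact measure_lt_decreasingRearrangement g s₀

theorem setLIntegral_le_primitive_decreasingRearrangement [SFinite ν] {f : α → ℝ≥0∞}
    (hf : Measurable f) (E : Set α) :
    ∫⁻ x in E, f x ∂ν ≤ primitive (decreasingRearrangement ν f) (ν E) := by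
  rw [primitive, lintegral_eq_lintegral_measure_ofReal_lt hf,
    lintegral_eq_lintegral_measure_ofReal_lt (measurable_decreasingRearrangement f)]
  refine lintegral_mono fun t => ?_
  rw [volume_restrict_Ioo0_setOf_lt_decreasingRearrangement,
    Measure.restrict_apply (measurableSet_lt measurable_const hf)]
  exact le_min (measure_mono inter_subset_left) (measure_mono inter_subset_right)

lemma primitive_ofReal_sub_primitive_ofReal_le {f : ℝ → ℝ≥0∞} (hf : Measurable f) (u v : ℝ) :
    primitive f (ENNReal.ofReal u) - primitive f (ENNReal.ofReal v)
      ≤ primitive (decreasingRearrangement (volume.restrict (Ioi 0)) f)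
          (ENNReal.ofReal (u - v)) := by
  set E := Ioo 0 u \ Ioo 0 v
  have hE : E ⊆ Ioi 0 := fun t ht => ht.1.1
  calc primitive f (ENNReal.ofReal u) - primitive f (ENNReal.ofReal v) ≤ ∫⁻ t in E, f t := by
        rw [tsub_le_iff_right, primitive, primitive, Ioo0_ofReal, Ioo0_ofReal]
        refine (lintegral_mono_set ?_).trans (lintegral_union_le _ _ _)
        rw [sdiff_union_self]
        exact subset_union_left
    _ = ∫⁻ t in E, f t ∂(volume.restrict (Ioi 0)) := by
        rw [Measure.restrict_restrict_of_subset hE]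
    _ ≤ _ := setLIntegral_le_primitive_decreasingRearrangement hf E
    _ ≤ _ := by
        refine primitive_mono _ ?_
        rw [Measure.restrict_eq_self _ hE, ← Real.volume_Ico]
        exact measure_mono fun t ⟨⟨ht, htu⟩, htv⟩ => ⟨not_lt.mp fun h => htv ⟨ht, h⟩, htu⟩

lemma max_primitive_ofReal_sub_le {f : ℝ → ℝ≥0∞} (hf : Measurable f) (u v : ℝ) :
    max (primitive f (ENNReal.ofReal u) - primitive f (ENNReal.ofReal v))
        (primitive f (ENNReal.ofReal v) - primitive f (ENNReal.ofReal u))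
      ≤ primitive (decreasingRearrangement (volume.restrict (Ioi 0)) f) (ENNReal.ofReal |u - v|) :=
  max_le
    ((primitive_ofReal_sub_primitive_ofReal_le hf u v).trans
      (primitive_mono _ (ENNReal.ofReal_le_ofReal (le_abs_self _))))
    ((primitive_ofReal_sub_primitive_ofReal_le hf v u).trans
      (primitive_mono _ (ENNReal.ofReal_le_ofReal (abs_sub_comm u v ▸ le_abs_self _))))

section HardyOperator

variable {p q : ℝ≥0∞} {b g : ℝ → ℝ≥0∞}

lemma hardyOp_eq_zero_of_ae_eq_zero (hg : g =ᵐ[volume.restrict (Ioi 0)] 0) (b : ℝ → ℝ≥0∞) :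
    hardyOp b g = 0 := by
  funext x
  exact (lintegral_congr_ae (ae_restrict_of_ae_restrict_of_subset (Ioo0_subset_Ioi _) hg)).trans
    lintegral_zero

lemma hardyOp_eq_zero_of_eq_zero {x : ℝ} (hbx : b x = 0) (g : ℝ → ℝ≥0∞) : hardyOp b g x = 0 := by
  rw [hardyOp_eq_primitive, hbx, primitive, Ioo0_zero, Measure.restrict_empty,
    lintegral_zero_measure]

lemma hardyOp_indicator_Ioo0_one (b : ℝ → ℝ≥0∞) (x : ℝ) :
    hardyOp b ((Ioo0 1).indicator 1) x = min 1 (b x) := by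
  rw [hardyOp_eq_primitive, primitive, lintegral_indicator_one (measurableSet_Ioo0 1),
    Measure.restrict_apply (measurableSet_Ioo0 1), Ioo0_inter_Ioo0, volume_Ioo0]

lemma lqNorm_indicator_Ioo0_one (hp : p ≠ 0) : lqNorm p ((Ioo0 1).indicator 1) = 1 := by
  have hvol : volume.restrict (Ioi 0) (Ioo0 1) = 1 := by
    rw [Measure.restrict_eq_self _ (Ioo0_subset_Ioi 1), volume_Ioo0]
  rw [lqNorm_eq_eLpNorm hp, Pi.one_def,
    eLpNorm_indicator_const' (measurableSet_Ioo0 1) (by simp [hvol]) hp, hvol]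
  simp

lemma lqNorm_eq_zero_of_ae_eq_zero (hq : q ≠ 0) (hg : g =ᵐ[volume.restrict (Ioi 0)] 0) :
    lqNorm q g = 0 := by
  rw [lqNorm_eq_eLpNorm hq, eLpNorm_congr_ae hg, eLpNorm_zero]

lemma lqNorm_hardyOp_le_Npq_mul_of_ne_zero_of_ne_top (hg : Measurable g) (h0 : lqNorm p g ≠ 0)
    (htop : lqNorm p g ≠ ∞) : lqNorm q (hardyOp b g) ≤ Npq p q b * lqNorm p g :=
  (ENNReal.div_le_iff_le_mul (.inl h0) (.inl htop)).mp <|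
    le_sInf fun _ hC => (ENNReal.div_le_iff_le_mul (.inl h0) (.inl htop)).mpr (hC g hg)

lemma ae_eq_zero_of_Npq_eq_zero (hp : p ≠ 0) (hq : q ≠ 0) (hb : Measurable b)
    (hN : Npq p q b = 0) : b =ᵐ[volume.restrict (Ioi 0)] 0 := by
  have hχ := lqNorm_indicator_Ioo0_one hp
  have h := lqNorm_hardyOp_le_Npq_mul_of_ne_zero_of_ne_top (p := p) (q := q) (b := b)
    (measurable_one.indicator (measurableSet_Ioo0 1)) (by simp [hχ]) (by simp [hχ])
  rw [hN, zero_mul, nonpos_iff_eq_zero, funext (hardyOp_indicator_Ioo0_one b),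
    lqNorm_eq_eLpNorm hq,
    eLpNorm_eq_zero_iff (measurable_const.min hb).aestronglyMeasurable hq] at h
  filter_upwards [h] with x hx
  simpa using hx

theorem lqNorm_hardyOp_le_Npq_mul (hp : p ≠ 0) (hq : q ≠ 0) (hb : Measurable b)
    (hg : Measurable g) : lqNorm q (hardyOp b g) ≤ Npq p q b * lqNorm p g := by
  rcases eq_or_ne (lqNorm p g) 0 with h0 | h0
  · rw [lqNorm_eq_eLpNorm hp, eLpNorm_eq_zero_iff hg.aestronglyMeasurable hp] at h0
    rw [hardyOp_eq_zero_of_ae_eq_zero h0, lqNorm_eq_zero_of_ae_eq_zero hq EventuallyEq.rfl]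
    exact zero_le
  rcases eq_or_ne (lqNorm p g) ∞ with htop | htop
  -- Since `0 * ∞ = 0`, the case `N_{p,q}(b) = 0` needs `b = 0` a.e.
  · rcases eq_or_ne (Npq p q b) 0 with hN | hN
    · have hHg : hardyOp b g =ᵐ[volume.restrict (Ioi 0)] 0 :=
        (ae_eq_zero_of_Npq_eq_zero hp hq hb hN).mono fun _ hx => hardyOp_eq_zero_of_eq_zero hx g
      rw [lqNorm_eq_zero_of_ae_eq_zero hq hHg]
      exact zero_le
    · rw [htop, ENNReal.mul_top hN]
      exact le_top
  · exact lqNorm_hardyOp_le_Npq_mul_of_ne_zero_of_ne_top hg h0 htop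

end HardyOperator

end NormalFormHardy

open NormalFormHardy

theorem hardy_difference_bound_general (p q : ℝ≥0∞) (hp : 0 < p) (hq : 0 < q)
    (a b : ℝ → ℝ)
    (star : ℝ → ℝ≥0∞)
    (hstar : ∀ x : ℝ, star x =
      ⨆ (t : ℝ) (_ : 0 < t ∧
        ENNReal.ofReal x < volume {y : ℝ | 0 < y ∧ t < |a y - b y|}),
        ENNReal.ofReal t) :
    ∀ f : ℝ → ℝ≥0∞, Measurable f →
      lqNorm q (fun x =>
          max (hardyOp (fun z => ENNReal.ofReal (a z)) f x -
                hardyOp (fun z => ENNReal.ofReal (b z)) f x)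
              (hardyOp (fun z => ENNReal.ofReal (b z)) f x -
                hardyOp (fun z => ENNReal.ofReal (a z)) f x)) ≤
        Npq p q star * lqNorm p f := by
  intro f hf
  set μ : Measure ℝ := volume.restrict (Ioi 0)
  set fs := decreasingRearrangement μ f
  have hstar_eq : star = decreasingRearrangement μ (fun y => ENNReal.ofReal |a y - b y|) := by
    funext x
    rw [hstar, ← iSup_ofReal_eq_decreasingRearrangement]
    simp_rw [μ, Measure.restrict_apply' measurableSet_Ioi, inter_comm]
    rfl
  have hstar_meas : Measurable star := hstar_eq ▸ measurable_decreasingRearrangement _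
  calc _ ≤ lqNorm q (fun x => primitive fs (ENNReal.ofReal |a x - b x|)) := by
        rw [lqNorm_eq_eLpNorm hq.ne', lqNorm_eq_eLpNorm hq.ne']
        exact eLpNorm_mono_enorm fun x => max_primitive_ofReal_sub_le hf (a x) (b x)
    _ ≤ lqNorm q (hardyOp star fs) := by
        rw [lqNorm_eq_eLpNorm hq.ne', lqNorm_eq_eLpNorm hq.ne', hstar_eq]
        exact eLpNorm_le_eLpNorm_of_measure_lt_le
          ((primitive_mono fs).comp_antitone (antitone_decreasingRearrangement _)).measurable
          (fun c => (measure_lt_primitive_comp_decreasingRearrangement fs _ c).ge) q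
    _ ≤ Npq p q star * lqNorm p fs :=
        lqNorm_hardyOp_le_Npq_mul hp.ne' hq.ne' hstar_meas
          (measurable_decreasingRearrangement f)
    _ = Npq p q star * lqNorm p f := by
        rw [lqNorm_eq_eLpNorm hp.ne', lqNorm_eq_eLpNorm hp.ne', eLpNorm_decreasingRearrangement hf]

/-- `‖H_a f - H_b f‖_q ≤ N_{p,q}(|a-b|^*) ‖f‖_p` for
finite-valued non-increasing parameters `a, b`. -/
theorem hardy_difference_bound (p q : ℝ≥0∞) (hp : 0 < p) (hq : 0 < q)
    (a b : ℝ → ℝ)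
    (ha0 : ∀ x ∈ Ioi (0:ℝ), 0 ≤ a x) (hb0 : ∀ x ∈ Ioi (0:ℝ), 0 ≤ b x)
    (ha : AntitoneOn a (Ioi 0)) (hb : AntitoneOn b (Ioi 0))
    (star : ℝ → ℝ≥0∞)
    (hstar : ∀ x : ℝ, star x =
      ⨆ (t : ℝ) (_ : 0 < t ∧
        ENNReal.ofReal x < volume {y : ℝ | 0 < y ∧ t < |a y - b y|}),
        ENNReal.ofReal t) :
    ∀ f : ℝ → ℝ≥0∞, Measurable f →
      lqNorm q (fun x =>
          max (hardyOp (fun z => ENNReal.ofReal (a z)) f x -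
                hardyOp (fun z => ENNReal.ofReal (b z)) f x)
              (hardyOp (fun z => ENNReal.ofReal (b z)) f x -
                hardyOp (fun z => ENNReal.ofReal (a z)) f x)) ≤
        Npq p q star * lqNorm p f :=
  hardy_difference_bound_general p q hp hq a b star hstar
end
end

section
/- Let 1 < p < ∞, 0 < q < ∞, let b : (0,∞) → [0,∞] be non-increasing, and let C ≥ 0. If the inequality ‖H_b f‖_{L^q(0,∞)} ≤ C‖f‖_{L^p(0,∞)} holds for every f : (0,∞) → [0,∞) that is non-increasing, continuous, bounded, and supported in (0,n) for some natural number n, then N_{p,q}(b) ≤ C; that is, the same inequality holds for all nonnegative Lebesgue-measurable f on (0,∞). -/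
open MeasureTheory Set Filter Topology
open scoped ENNReal

noncomputable section

/-!
By the Hardy–Littlewood inequality `∫_S f ≤ ∫_0^{|S|} f^*`, the Hardy operator only grows when `f`
is replaced by its decreasing rearrangement `f^*`, which has the same `L^p` norm; so it suffices
to treat non-increasing `f`. Such an `f` is approximated from below by test functions: truncate
at height and length `n`, then average over windows of length `1/n`. The approximants converge
to `f` at every continuity point of `f`, hence almost everywhere, and Fatou's lemma, used once
inside `H_b` and once in `L^q`, passes the inequality to the limit.
-/

-- The interval `(0, c)` for `c : ℝ≥0∞`; `hardyOp b f x` integrates `f` over `initialSeg (b x)`.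
def initialSeg (c : ℝ≥0∞) : Set ℝ := {t | 0 < t ∧ ENNReal.ofReal t < c}

lemma initialSeg_subset_Ioi (c : ℝ≥0∞) : initialSeg c ⊆ Ioi 0 := fun _ ht => ht.1

lemma initialSeg_min (c d : ℝ≥0∞) : initialSeg (min c d) = initialSeg c ∩ initialSeg d := by
  ext t
  simp only [initialSeg, lt_min_iff, mem_ofPred_eq, mem_inter_iff]
  tauto

lemma volume_initialSeg (c : ℝ≥0∞) : volume (initialSeg c) = c := by
  rcases eq_or_ne c ∞ with rfl | hc
  · have : initialSeg ∞ = Ioi 0 := by ext t; simp [initialSeg]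
    rw [this, Real.volume_Ioi]
  · have : initialSeg c = Ioo 0 c.toReal := by
      ext t
      exact and_congr_right fun ht => ENNReal.ofReal_lt_iff_lt_toReal ht.le hc
    rw [this, Real.volume_Ioo, sub_zero, ENNReal.ofReal_toReal hc]

theorem lintegral_eq_lintegral_meas_ofReal_lt {α : Type*} [MeasurableSpace α] (μ : Measure α)
    [SFinite μ] {f : α → ℝ≥0∞} (hf : Measurable f) :
    ∫⁻ a, f a ∂μ = ∫⁻ t in Ioi (0 : ℝ), μ {a | ENNReal.ofReal t < f a} := by
  have hs : MeasurableSet {p : α × ℝ | ENNReal.ofReal p.2 < f p.1} :=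
    measurableSet_lt (by fun_prop) (by fun_prop)
  calc ∫⁻ a, f a ∂μ
        = ∫⁻ a, (∫⁻ (t : ℝ) in Ioi 0, {t : ℝ | ENNReal.ofReal t < f a}.indicator 1 t) ∂μ := by
        refine lintegral_congr fun a => ?_
        rw [lintegral_indicator_one (measurableSet_lt ENNReal.measurable_ofReal measurable_const),
          Measure.restrict_apply (measurableSet_lt ENNReal.measurable_ofReal measurable_const),
          inter_comm]
        exact (volume_initialSeg (f a)).symm
    _ = ∫⁻ (t : ℝ) in Ioi 0, ∫⁻ a, {a | ENNReal.ofReal t < f a}.indicator 1 a ∂μ :=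
        lintegral_lintegral_swap (f := fun a (t : ℝ) => {t | ENNReal.ofReal t < f a}.indicator 1 t)
          (measurable_const.indicator hs).aemeasurable
    _ = _ := lintegral_congr fun t => lintegral_indicator_one (measurableSet_lt measurable_const hf)

lemma lintegral_rpow_eq_of_meas_lt_eq {α β : Type*} [MeasurableSpace α] [MeasurableSpace β]
    {μ : Measure α} {ν : Measure β} [SFinite μ] [SFinite ν] {f : α → ℝ≥0∞} {g : β → ℝ≥0∞}
    (hf : Measurable f) (hg : Measurable g) (hfg : ∀ c, μ {x | c < f x} = ν {y | c < g y})
    {r : ℝ} (hr : 0 < r) : ∫⁻ x, f x ^ r ∂μ = ∫⁻ y, g y ^ r ∂ν := by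
  rw [lintegral_eq_lintegral_meas_ofReal_lt _ (hf.pow_const r),
    lintegral_eq_lintegral_meas_ofReal_lt _ (hg.pow_const r)]
  simp only [← ENNReal.rpow_inv_lt_iff hr, hfg]

section LqNorm

variable {α : Type*} [MeasurableSpace α] {ν : Measure α} {r : ℝ}

lemma lqNormGen_ofReal (hr : 0 < r) (g : α → ℝ≥0∞) :
    lqNormGen ν (ENNReal.ofReal r) g = (∫⁻ x, g x ^ r ∂ν) ^ r⁻¹ := by
  rw [lqNormGen, if_neg ENNReal.ofReal_ne_top, ENNReal.toReal_ofReal hr.le, one_div]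

lemma lqNormGen_mono_ae (hr : 0 < r) {g h : α → ℝ≥0∞} (hgh : g ≤ᵐ[ν] h) :
    lqNormGen ν (ENNReal.ofReal r) g ≤ lqNormGen ν (ENNReal.ofReal r) h := by
  rw [lqNormGen_ofReal hr, lqNormGen_ofReal hr]
  gcongr ?_ ^ _
  exact lintegral_mono_ae (hgh.mono fun x hx => by gcongr)

lemma lqNormGen_le_of_ae_le_liminf (hr : 0 < r) {g : α → ℝ≥0∞} {u : ℕ → α → ℝ≥0∞}
    (hu : ∀ n, AEMeasurable (u n) ν) (hgu : ∀ᵐ x ∂ν, g x ≤ liminf (fun n => u n x) atTop)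
    {B : ℝ≥0∞} (hB : ∀ n, lqNormGen ν (ENNReal.ofReal r) (u n) ≤ B) :
    lqNormGen ν (ENNReal.ofReal r) g ≤ B := by
  have hpow_liminf (v : ℕ → ℝ≥0∞) : liminf v atTop ^ r = liminf (fun n => v n ^ r) atTop :=
    (ENNReal.monotone_rpow_of_nonneg hr.le).map_liminf_of_continuousAt v
      ENNReal.continuous_rpow_const.continuousAt
  simp_rw [lqNormGen_ofReal hr, ← ENNReal.le_rpow_inv_iff (inv_pos.2 hr), inv_inv] at hB ⊢
  calc ∫⁻ x, g x ^ r ∂ν ≤ ∫⁻ x, liminf (fun n => u n x ^ r) atTop ∂ν :=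
        lintegral_mono_ae (hgu.mono fun x hx => (hpow_liminf _).le.trans' (by gcongr))
    _ ≤ liminf (fun n => ∫⁻ x, u n x ^ r ∂ν) atTop :=
        lintegral_liminf_le' fun n => (hu n).pow_const r
    _ ≤ B ^ r := liminf_le_of_frequently_le' (Frequently.of_forall hB)

end LqNorm

section DecreasingRearrangement

variable {α : Type*} [MeasurableSpace α] (μ : Measure α) (f : α → ℝ≥0∞)

def decRearr (t : ℝ) : ℝ≥0∞ := sInf {c | μ {x | c < f x} ≤ ENNReal.ofReal t}

lemma antitone_decRearr : Antitone (decRearr μ f) :=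
  fun _ _ hst => sInf_le_sInf fun _ hc => hc.trans (ENNReal.ofReal_le_ofReal hst)

-- `μ {c < f}` is right-continuous in `c`, so the infimum defining `decRearr` is attained.
lemma lt_decRearr_iff {c : ℝ≥0∞} {t : ℝ} :
    c < decRearr μ f t ↔ ENNReal.ofReal t < μ {x | c < f x} := by
  refine ⟨fun h => lt_of_not_ge fun hle => ?_, fun h => ?_⟩
  · exact (sInf_le (show c ∈ {c | μ {x | c < f x} ≤ ENNReal.ofReal t} from hle)).not_gt h
  by_contra! hle
  have hc : c < ∞ := by
    by_contra! hc
    simp [top_le_iff.1 hc] at h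
  obtain ⟨d, hd_anti, hd_gt, hd_lim⟩ := exists_seq_strictAnti_tendsto' hc
  have hunion : {x | c < f x} = ⋃ n, {x | d n < f x} := by
    ext x
    simp only [mem_ofPred_eq, mem_iUnion]
    exact ⟨fun hx => (hd_lim.eventually (gt_mem_nhds hx)).exists,
      fun ⟨n, hn⟩ => (hd_gt n).1.trans hn⟩
  have hmono : Monotone fun n => {x | d n < f x} :=
    fun _ _ hnm _ hx => (hd_anti.antitone hnm).trans_lt hx
  refine h.not_ge ?_
  rw [hunion, hmono.measure_iUnion]
  refine iSup_le fun n => ?_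
  obtain ⟨e, he, hed⟩ := sInf_lt_iff.1 (hle.trans_lt (hd_gt n).1)
  exact (measure_mono fun x hx => hed.trans hx).trans he

lemma initialSeg_meas_lt (c : ℝ≥0∞) :
    initialSeg (μ {x | c < f x}) = Ioi 0 ∩ {t | c < decRearr μ f t} := by
  ext t
  exact and_congr_right fun _ => (lt_decRearr_iff μ f).symm

lemma measurableSet_lt_decRearr (c : ℝ≥0∞) : MeasurableSet {t | c < decRearr μ f t} :=
  measurableSet_lt measurable_const (antitone_decRearr μ f).measurable

lemma restrict_Ioi_meas_lt_decRearr (c : ℝ≥0∞) :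
    volume.restrict (Ioi 0) {t | c < decRearr μ f t} = μ {x | c < f x} := by
  rw [Measure.restrict_apply (measurableSet_lt_decRearr μ f c), inter_comm,
    ← initialSeg_meas_lt, volume_initialSeg]

theorem setLIntegral_le_lintegral_decRearr [SFinite μ] {f : α → ℝ≥0∞} (hf : Measurable f)
    (S : Set α) : ∫⁻ x in S, f x ∂μ ≤ ∫⁻ t in initialSeg (μ S), decRearr μ f t := by
  rw [lintegral_eq_lintegral_meas_ofReal_lt _ hf,
    lintegral_eq_lintegral_meas_ofReal_lt _ (antitone_decRearr μ f).measurable]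
  refine lintegral_mono fun t => ?_
  set c := ENNReal.ofReal t
  have hS : {t | c < decRearr μ f t} ∩ initialSeg (μ S) =
      initialSeg (min (μ S) (μ {x | c < f x})) := by
    rw [initialSeg_min, initialSeg_meas_lt, ← inter_assoc,
      inter_eq_left.2 (initialSeg_subset_Ioi _), inter_comm]
  rw [Measure.restrict_apply (measurableSet_lt measurable_const hf),
    Measure.restrict_apply (measurableSet_lt_decRearr μ f c), hS, volume_initialSeg]
  exact le_min (measure_mono inter_subset_right) (measure_mono inter_subset_left)

end DecreasingRearrangement

lemma lqNorm_decRearr {α : Type*} [MeasurableSpace α] {μ : Measure α} [SFinite μ]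
    {f : α → ℝ≥0∞} (hf : Measurable f) {r : ℝ} (hr : 0 < r) :
    lqNorm (ENNReal.ofReal r) (decRearr μ f) = lqNormGen μ (ENNReal.ofReal r) f := by
  rw [lqNorm, lqNormGen_ofReal hr, lqNormGen_ofReal hr,
    lintegral_rpow_eq_of_meas_lt_eq (antitone_decRearr μ f).measurable hf
      (restrict_Ioi_meas_lt_decRearr μ f) hr]

lemma hardyOp_le_hardyOp_decRearr (b : ℝ → ℝ≥0∞) {f : ℝ → ℝ≥0∞} (hf : Measurable f) (x : ℝ) :
    hardyOp b f x ≤ hardyOp b (decRearr (volume.restrict (Ioi 0)) f) x := by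
  have hsub := initialSeg_subset_Ioi (b x)
  have := setLIntegral_le_lintegral_decRearr (volume.restrict (Ioi 0)) hf (initialSeg (b x))
  rwa [Measure.restrict_restrict_of_subset hsub, Measure.restrict_eq_self _ hsub,
    volume_initialSeg] at this

structure IsHardyTestFunction (f : ℝ → ℝ) : Prop where
  nonneg : ∀ x, 0 ≤ f x
  antitoneOn : AntitoneOn f (Ioi 0)
  continuousOn : ContinuousOn f (Ioi 0)
  bddAbove : ∃ M : ℝ, ∀ x, f x ≤ M
  support : ∃ n : ℕ, ∀ x : ℝ, x ∉ Ioo (0 : ℝ) n → f x = 0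

section WindowAverage

def windowAvg (T : ℝ → ℝ) (n : ℕ) (x : ℝ) : ℝ := n * ∫ t in x..x + (n : ℝ)⁻¹, T t

variable {T : ℝ → ℝ} (n : ℕ)

lemma windowAvg_nonneg (hT : ∀ t, 0 ≤ T t) (x : ℝ) : 0 ≤ windowAvg T n x :=
  mul_nonneg n.cast_nonneg
    (intervalIntegral.integral_nonneg (le_add_of_nonneg_right (by positivity)) fun t _ => hT t)

variable (hT : Antitone T)
include hT

lemma antitone_windowAvg : Antitone (windowAvg T n) := by
  intro x y hxy
  have hshift : ∫ t in y..y + (n : ℝ)⁻¹, T t = ∫ t in x..x + (n : ℝ)⁻¹, T (t + (y - x)) := by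
    rw [intervalIntegral.integral_comp_add_right]
    ring_nf
  rw [windowAvg, windowAvg, hshift]
  refine mul_le_mul_of_nonneg_left (intervalIntegral.integral_mono_on (by simp)
    (hT.comp_monotone (monotone_id.add_const _)).intervalIntegrable hT.intervalIntegrable
    fun t _ => hT (le_add_of_nonneg_right (sub_nonneg.2 hxy))) (Nat.cast_nonneg n)

lemma continuous_windowAvg : Continuous (windowAvg T n) := by
  have hint : ∀ a b, IntervalIntegrable T volume a b := fun _ _ => hT.intervalIntegrable
  have hprim := intervalIntegral.continuous_primitive hint 0
  have hdiff : windowAvg T n = fun x =>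
      n * ((∫ t in (0 : ℝ)..x + (n : ℝ)⁻¹, T t) - ∫ t in (0 : ℝ)..x, T t) := by
    ext x
    rw [windowAvg, intervalIntegral.integral_interval_sub_left (hint _ _) (hint _ _)]
  rw [hdiff]
  fun_prop

lemma windowAvg_le {x : ℝ} (hx : 0 ≤ T x) : windowAvg T n x ≤ T x := by
  rcases n.eq_zero_or_pos with rfl | hn
  · simpa [windowAvg] using hx
  have hn' : (0 : ℝ) < n := by exact_mod_cast hn
  calc windowAvg T n x ≤ n * ∫ _ in x..x + (n : ℝ)⁻¹, T x := by
        unfold windowAvg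
        gcongr
        exact intervalIntegral.integral_mono_on (by simp [hn'.le]) hT.intervalIntegrable
          intervalIntegrable_const fun t ht => hT ht.1
    _ = T x := by
        rw [intervalIntegral.integral_const, smul_eq_mul, add_sub_cancel_left, ← mul_assoc,
          mul_inv_cancel₀ hn'.ne', one_mul]

lemma le_windowAvg (hn : 0 < n) (x : ℝ) : T (x + (n : ℝ)⁻¹) ≤ windowAvg T n x := by
  have hn' : (0 : ℝ) < n := by exact_mod_cast hn
  calc T (x + (n : ℝ)⁻¹) = n * ∫ _ in x..x + (n : ℝ)⁻¹, T (x + (n : ℝ)⁻¹) := by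
        rw [intervalIntegral.integral_const, smul_eq_mul, add_sub_cancel_left, ← mul_assoc,
          mul_inv_cancel₀ hn'.ne', one_mul]
    _ ≤ windowAvg T n x := by
        unfold windowAvg
        gcongr
        exact intervalIntegral.integral_mono_on (by simp [hn'.le]) intervalIntegrable_const
          hT.intervalIntegrable fun t ht => hT ht.2

end WindowAverage

section Approximation

variable {g : ℝ → ℝ≥0∞} (n : ℕ)

def truncate (g : ℝ → ℝ≥0∞) (n : ℕ) : ℝ → ℝ :=
  (Iio (n : ℝ)).indicator fun t => (min (g t) n).toReal

lemma truncate_nonneg (t : ℝ) : 0 ≤ truncate g n t :=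
  indicator_nonneg (fun _ _ => ENNReal.toReal_nonneg) t

lemma ofReal_truncate {t : ℝ} (ht : t < n) : ENNReal.ofReal (truncate g n t) = min (g t) n := by
  rw [truncate, indicator_of_mem (mem_Iio.2 ht),
    ENNReal.ofReal_toReal ((min_le_right _ _).trans_lt (ENNReal.natCast_lt_top n)).ne]

lemma ofReal_truncate_le_min (t : ℝ) : ENNReal.ofReal (truncate g n t) ≤ min (g t) n := by
  by_cases ht : t < n
  · exact (ofReal_truncate n ht).le
  · simp [truncate, indicator_of_notMem (notMem_Iio.2 (not_lt.1 ht))]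

lemma truncate_le (t : ℝ) : truncate g n t ≤ n :=
  indicator_apply_le' (fun _ => (ENNReal.toReal_mono (ENNReal.natCast_ne_top n)
    (min_le_right _ _)).trans_eq (ENNReal.toReal_natCast n)) fun _ => n.cast_nonneg

lemma antitone_truncate (hg : Antitone g) : Antitone (truncate g n) := by
  intro s t hst
  by_cases ht : t < n
  · rw [truncate, indicator_of_mem (mem_Iio.2 ht), indicator_of_mem (mem_Iio.2 (hst.trans_lt ht))]
    exact ENNReal.toReal_mono ((min_le_right _ _).trans_lt (ENNReal.natCast_lt_top n)).ne
      (min_le_min_right _ (hg hst))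
  · rw [truncate, indicator_of_notMem (notMem_Iio.2 (not_lt.1 ht))]
    exact truncate_nonneg n s

def testApprox (g : ℝ → ℝ≥0∞) (n : ℕ) : ℝ → ℝ := (Ioi 0).indicator (windowAvg (truncate g n) n)

variable (hg : Antitone g)
include hg

lemma isHardyTestFunction_testApprox : IsHardyTestFunction (testApprox g n) := by
  have hT := antitone_truncate n hg
  have hle (x : ℝ) : windowAvg (truncate g n) n x ≤ truncate g n x :=
    windowAvg_le n hT (truncate_nonneg n x)
  have hnonneg := windowAvg_nonneg n (truncate_nonneg (g := g) n)
  refine ⟨fun x => indicator_nonneg (fun x _ => hnonneg x) x, ?_, ?_, ⟨n, fun x => ?_⟩,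
    ⟨n, fun x hx => ?_⟩⟩
  · intro x hx y hy hxy
    simp only [testApprox, indicator_of_mem hx, indicator_of_mem hy]
    exact antitone_windowAvg n hT hxy
  · exact (continuous_windowAvg n hT).continuousOn.congr fun x hx => indicator_of_mem hx _
  · exact indicator_apply_le' (fun _ => (hle x).trans (truncate_le n x)) fun _ => n.cast_nonneg
  · rcases le_or_gt x 0 with hx0 | hx0
    · exact indicator_of_notMem (notMem_Ioi.2 hx0) _
    · have hxn : (n : ℝ) ≤ x := not_lt.1 fun h => hx ⟨hx0, h⟩
      rw [testApprox, indicator_of_mem (mem_Ioi.2 hx0)]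
      refine le_antisymm ((hle x).trans_eq ?_) (hnonneg x)
      exact indicator_of_notMem (notMem_Iio.2 hxn) _

lemma measurable_testApprox : Measurable (testApprox g n) :=
  (continuous_windowAvg n (antitone_truncate n hg)).measurable.indicator measurableSet_Ioi

lemma ofReal_testApprox_le {x : ℝ} (hx : 0 < x) : ENNReal.ofReal (testApprox g n x) ≤ g x := by
  rw [testApprox, indicator_of_mem (mem_Ioi.2 hx)]
  calc ENNReal.ofReal (windowAvg (truncate g n) n x)
      ≤ ENNReal.ofReal (truncate g n x) :=
        ENNReal.ofReal_le_ofReal (windowAvg_le n (antitone_truncate n hg) (truncate_nonneg n x))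
    _ ≤ g x := (ofReal_truncate_le_min n x).trans (min_le_left _ _)

lemma le_liminf_ofReal_testApprox {x : ℝ} (hx : 0 < x) (hgx : ContinuousAt g x) :
    g x ≤ liminf (fun n => ENNReal.ofReal (testApprox g n x)) atTop := by
  refine le_of_forall_lt_imp_le_of_dense fun c hc => le_liminf_of_le (by isBoundedDefault) ?_
  have hshift : Tendsto (fun n : ℕ => x + (n : ℝ)⁻¹) atTop (𝓝 x) := by
    simpa using tendsto_const_nhds.add (tendsto_inv_atTop_nhds_zero_nat (𝕜 := ℝ))
  have hgc : ∀ᶠ n : ℕ in atTop, c < g (x + (n : ℝ)⁻¹) :=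
    (hgx.tendsto.comp hshift).eventually_const_lt hc
  have hnc : ∀ᶠ n : ℕ in atTop, c < n := by
    obtain ⟨m, hm⟩ := ENNReal.exists_nat_gt (ne_top_of_lt hc)
    filter_upwards [eventually_ge_atTop m] with n hn
    exact hm.trans_le (by exact_mod_cast hn)
  have hxn : ∀ᶠ n : ℕ in atTop, x + (n : ℝ)⁻¹ < n :=
    (hshift.eventually (gt_mem_nhds (lt_add_one x))).and
      (tendsto_natCast_atTop_atTop.eventually_gt_atTop (x + 1)) |>.mono fun _ h => h.1.trans h.2
  filter_upwards [hgc, hnc, hxn, eventually_gt_atTop 0] with n hgn hcn hxn hn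
  rw [testApprox, indicator_of_mem (mem_Ioi.2 hx)]
  calc c ≤ min (g (x + (n : ℝ)⁻¹)) n := le_min hgn.le hcn.le
    _ = ENNReal.ofReal (truncate g n (x + (n : ℝ)⁻¹)) := (ofReal_truncate n hxn).symm
    _ ≤ ENNReal.ofReal (windowAvg (truncate g n) n x) :=
        ENNReal.ofReal_le_ofReal (le_windowAvg n (antitone_truncate n hg) hn x)

lemma ae_le_liminf_ofReal_testApprox :
    ∀ᵐ x ∂volume.restrict (Ioi 0),
      g x ≤ liminf (fun n => ENNReal.ofReal (testApprox g n x)) atTop := by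
  have hcont : ∀ᵐ x, ContinuousAt g x := by
    simpa using measure_eq_zero_iff_ae_notMem.1 (hg.countable_not_continuousAt.measure_zero volume)
  filter_upwards [self_mem_ae_restrict measurableSet_Ioi, ae_restrict_of_ae hcont] with x hx hgx
  exact le_liminf_ofReal_testApprox hg hx hgx

end Approximation

lemma antitoneOn_hardyOp {b : ℝ → ℝ≥0∞} (hb : AntitoneOn b (Ioi 0)) (f : ℝ → ℝ≥0∞) :
    AntitoneOn (hardyOp b f) (Ioi 0) :=
  fun _ hx _ hy hxy => lintegral_mono_set fun _ ht => ⟨ht.1, ht.2.trans_le (hb hx hy hxy)⟩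

lemma hardyOp_le_liminf (b : ℝ → ℝ≥0∞) {g : ℝ → ℝ≥0∞} {u : ℕ → ℝ → ℝ≥0∞}
    (hu : ∀ n, Measurable (u n))
    (hgu : ∀ᵐ t ∂volume.restrict (Ioi 0), g t ≤ liminf (fun n => u n t) atTop) (x : ℝ) :
    hardyOp b g x ≤ liminf (fun n => hardyOp b (u n) x) atTop :=
  (lintegral_mono_ae (ae_restrict_of_ae_restrict_of_subset (initialSeg_subset_Ioi _) hgu)).trans
    (lintegral_liminf_le hu)

theorem lqNorm_hardyOp_le_of_antitone {p q : ℝ} (hp : 0 < p) (hq : 0 < q) {b : ℝ → ℝ≥0∞}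
    (hb : AntitoneOn b (Ioi 0)) {C : ℝ≥0∞}
    (H : ∀ f, IsHardyTestFunction f →
      lqNorm (ENNReal.ofReal q) (hardyOp b fun t => ENNReal.ofReal (f t)) ≤
        C * lqNorm (ENNReal.ofReal p) fun t => ENNReal.ofReal (f t))
    {g : ℝ → ℝ≥0∞} (hg : Antitone g) :
    lqNorm (ENNReal.ofReal q) (hardyOp b g) ≤ C * lqNorm (ENNReal.ofReal p) g := by
  set u : ℕ → ℝ → ℝ≥0∞ := fun n t => ENNReal.ofReal (testApprox g n t)
  have hu : ∀ n, Measurable (u n) :=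
    fun n => ENNReal.measurable_ofReal.comp (measurable_testApprox n hg)
  have hug : ∀ n, u n ≤ᵐ[volume.restrict (Ioi 0)] g :=
    fun n => ae_restrict_of_forall_mem measurableSet_Ioi fun _ hx => ofReal_testApprox_le n hg hx
  refine lqNormGen_le_of_ae_le_liminf hq
    (fun n => aemeasurable_restrict_of_antitoneOn measurableSet_Ioi (antitoneOn_hardyOp hb _))
    (ae_of_all _ (hardyOp_le_liminf b hu (ae_le_liminf_ofReal_testApprox hg))) fun n => ?_
  calc lqNorm (ENNReal.ofReal q) (hardyOp b (u n)) ≤ C * lqNorm (ENNReal.ofReal p) (u n) :=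
        H _ (isHardyTestFunction_testApprox n hg)
    _ ≤ C * lqNorm (ENNReal.ofReal p) g := by gcongr; exact lqNormGen_mono_ae hp (hug n)

/-- It suffices to test the normal form Hardy inequality on
non-increasing, continuous, bounded, compactly supported functions. -/
theorem test_on_decreasing (p q : ℝ) (hp : 1 < p) (hq : 0 < q)
    (b : ℝ → ℝ≥0∞) (hb : AntitoneOn b (Ioi 0)) (C : ℝ≥0∞)
    (H : ∀ f : ℝ → ℝ,
      (∀ x, 0 ≤ f x) → AntitoneOn f (Ioi 0) → ContinuousOn f (Ioi 0) →
      (∃ M : ℝ, ∀ x, f x ≤ M) →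
      (∃ n : ℕ, ∀ x : ℝ, x ∉ Ioo (0:ℝ) (n:ℝ) → f x = 0) →
      lqNorm (ENNReal.ofReal q) (hardyOp b fun t => ENNReal.ofReal (f t)) ≤
        C * lqNorm (ENNReal.ofReal p) fun t => ENNReal.ofReal (f t)) :
    (∀ f : ℝ → ℝ≥0∞, Measurable f →
      lqNorm (ENNReal.ofReal q) (hardyOp b f) ≤ C * lqNorm (ENNReal.ofReal p) f) ∧
    Npq (ENNReal.ofReal p) (ENNReal.ofReal q) b ≤ C := by
  have hp0 : 0 < p := zero_lt_one.trans hp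
  have hdec : ∀ g : ℝ → ℝ≥0∞, Antitone g →
      lqNorm (ENNReal.ofReal q) (hardyOp b g) ≤ C * lqNorm (ENNReal.ofReal p) g :=
    fun g => lqNorm_hardyOp_le_of_antitone hp0 hq hb
      fun f hf => H f hf.nonneg hf.antitoneOn hf.continuousOn hf.bddAbove hf.support
  have hall : ∀ f : ℝ → ℝ≥0∞, Measurable f →
      lqNorm (ENNReal.ofReal q) (hardyOp b f) ≤ C * lqNorm (ENNReal.ofReal p) f := by
    intro f hf
    set μ := volume.restrict (Ioi (0 : ℝ))
    calc lqNorm (ENNReal.ofReal q) (hardyOp b f)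
        ≤ lqNorm (ENNReal.ofReal q) (hardyOp b (decRearr μ f)) :=
          lqNormGen_mono_ae hq (ae_of_all _ (hardyOp_le_hardyOp_decRearr b hf))
      _ ≤ C * lqNorm (ENNReal.ofReal p) (decRearr μ f) := hdec _ (antitone_decRearr μ f)
      _ = C * lqNorm (ENNReal.ofReal p) f := by rw [lqNorm_decRearr hf hp0, lqNorm]
  exact ⟨hall, sInf_le hall⟩
end
end
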